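/- arXiv:2212.11385 — 4 statements merged into one kernel-verified Lean document; each statement's English description precedes it below -/
import Mathlib

section
/- Under the condition that λ_r ≥ 2‖Ẑ‖ (guaranteed under the hypotheses of Lemma A.2), there exists an absolute constant C₅ such that |⟨ (Θ̂Θ̂ᵀ − ΘΘᵀ) A (Θ̂Θ̂ᵀ − ΘΘᵀ), T̃ ⟩| ≤ C₅ (4/ε²) ‖T‖_F κ σ √(d r log d / n) · (σ/λ_r) √(d log d / n). -/
open Matrix

noncomputable section

/-- Frobenius (trace) inner product of two real matrices. -/
def mInner {m n : Type*} [Fintype m] [Fintype n] (A B : Matrix m n ℝ) : ℝ :=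
  ∑ i, ∑ j, A i j * B i j

/-- Frobenius norm of a real matrix. -/
def frobNorm {m n : Type*} [Fintype m] [Fintype n] (A : Matrix m n ℝ) : ℝ :=
  Real.sqrt (∑ i, ∑ j, (A i j) ^ 2)

/-- ℓ2→ℓ2 operator (spectral) norm of a real matrix. -/
def opNorm {m n : Type*} [Fintype m] [Fintype n] (A : Matrix m n ℝ) : ℝ :=
  sSup {c | ∃ v : n → ℝ, (∑ j, (v j) ^ 2) ≤ 1 ∧ c = Real.sqrt (∑ i, (A.mulVec v i) ^ 2)}

variable {d1 d2 r : ℕ}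

/-- `Θ = blockdiag(U, V)`. -/
def ThetaMat (U : Matrix (Fin d1) (Fin r) ℝ) (V : Matrix (Fin d2) (Fin r) ℝ) :
    Matrix (Fin d1 ⊕ Fin d2) (Fin r ⊕ Fin r) ℝ :=
  Matrix.fromBlocks U 0 0 V

/-- Symmetric dilation `A = [[0, M],[Mᵀ, 0]]`. -/
def dilation (M : Matrix (Fin d1) (Fin d2) ℝ) :
    Matrix (Fin d1 ⊕ Fin d2) (Fin d1 ⊕ Fin d2) ℝ :=
  Matrix.fromBlocks 0 M Mᵀ 0

/-- `T̃ = [[0, T],[0, 0]]`. -/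
def Ttil (T : Matrix (Fin d1) (Fin d2) ℝ) :
    Matrix (Fin d1 ⊕ Fin d2) (Fin d1 ⊕ Fin d2) ℝ :=
  Matrix.fromBlocks 0 T 0 0

/-!
Write `P = ΘΘᵀ`, `P̂ = Θ̂Θ̂ᵀ` and `X = P̂ - P`. By Cauchy–Schwarz,
`|⟨X A X, T̃⟩| ≤ ‖X‖ ‖A‖ ‖X‖_F ‖T‖_F`, and since `X = (I - P)Θ̂Θ̂ᵀ - ((I - P̂)ΘΘᵀ)ᵀ` both `‖X‖` and
`‖X‖_F / √(2r)` are at most `‖(I - P)Θ̂‖ + ‖(I - P̂)Θ‖`. It remains to show that this sin-Θ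
quantity is at most `4‖Ẑ‖/λ_r`.

In the dilation, `A Θ = Θ K` and `Â Θ̂ = Θ̂ K̂`, where `K`, `K̂` carry the singular values in their
off-diagonal blocks. Hence `(I - P)Θ̂ K̂ = (I - P)(Â - A)Θ̂` and
`(I - P̂)Θ K = (I - P̂)Â(I - P̂)·(I - P̂)Θ - (I - P̂)(Â - A)Θ`, and inverting `K̂` and `K` gives the
bound, provided `|ŝ_j| ≥ λ_r - ‖Ẑ‖` and `‖(M + Ẑ)(I - V̂V̂ᵀ)‖ ≤ ‖Ẑ‖`.

These two Weyl-type facts come from the Eckart–Young optimality of `Û diag(ŝ) V̂ᵀ` alone: it forces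
`(M + Ẑ)V̂ = Û diag(ŝ)`, `Ûᵀ(M + Ẑ) = diag(ŝ)V̂ᵀ`, and that `V̂` maximises `‖(M + Ẑ)G‖_F` over
orthonormal `G`. Swapping one column of `V̂` for a unit vector `x` shows `‖(M + Ẑ)x‖ ≤ |ŝ_j|` when
`x ⟂ v̂_l` for `l ≠ j`; such an `x` can be found in the range of `V`, where `‖M x‖ ≥ λ_r`, and a
nonzero vector of `span(V̂, x) ∩ ker M` bounds `‖(M + Ẑ)x‖` by `‖Ẑ‖` when `x ⟂ V̂`.
-/

open WithLp
open scoped Matrix.Norms.L2Operator RealInnerProductSpace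

section EuclideanNorm

variable {m n k : Type*} [Fintype m] [Fintype n] [Fintype k]

lemma norm_toLp_eq_sqrt (v : n → ℝ) : ‖toLp 2 v‖ = Real.sqrt (∑ i, v i ^ 2) := by
  simp [EuclideanSpace.norm_eq]

lemma norm_toLp_sq (v : n → ℝ) : ‖toLp 2 v‖ ^ 2 = v ⬝ᵥ v := by
  rw [EuclideanSpace.real_norm_sq_eq]
  simp [dotProduct, sq]

lemma add_dotProduct_add_of_orthogonal {u v : n → ℝ} (h : u ⬝ᵥ v = 0) :
    (u + v) ⬝ᵥ (u + v) = u ⬝ᵥ u + v ⬝ᵥ v := by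
  rw [add_dotProduct, dotProduct_add, dotProduct_add, dotProduct_comm v u, h]
  ring

lemma mulVec_dotProduct_mulVec_of_orthonormal [DecidableEq k] {Q : Matrix m k ℝ}
    (hQ : Qᵀ * Q = 1) (v : k → ℝ) : (Q *ᵥ v) ⬝ᵥ (Q *ᵥ v) = v ⬝ᵥ v := by
  rw [dotProduct_mulVec, vecMul_mulVec, ← mulVec_transpose, hQ, transpose_one, one_mulVec]

lemma norm_toLp_mulVec_of_orthonormal [DecidableEq k] {Q : Matrix m k ℝ} (hQ : Qᵀ * Q = 1)
    (v : k → ℝ) : ‖toLp 2 (Q *ᵥ v)‖ = ‖toLp 2 v‖ := by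
  rw [← sq_eq_sq₀ (norm_nonneg _) (norm_nonneg _), norm_toLp_sq, norm_toLp_sq,
    mulVec_dotProduct_mulVec_of_orthonormal hQ]

lemma mulVec_add_smul_dotProduct_self [DecidableEq k] {Q : Matrix m k ℝ} (hQ : Qᵀ * Q = 1)
    {x : m → ℝ} (hx : Qᵀ *ᵥ x = 0) (a : k → ℝ) (b : ℝ) :
    (Q *ᵥ a + b • x) ⬝ᵥ (Q *ᵥ a + b • x) = a ⬝ᵥ a + b ^ 2 * (x ⬝ᵥ x) := by
  rw [add_dotProduct_add_of_orthogonal, mulVec_dotProduct_mulVec_of_orthonormal hQ]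
  · simp [sq, mul_assoc]
  · rw [dotProduct_smul, dotProduct_comm, dotProduct_mulVec, ← mulVec_transpose, hx,
      zero_dotProduct, smul_zero]

end EuclideanNorm

section OpNorm

variable {m n k : Type*} [Fintype m] [Fintype n] [Fintype k] [DecidableEq n]

lemma opNorm_eq_l2_opNorm (A : Matrix m n ℝ) : opNorm A = ‖A‖ := by
  rw [l2_opNorm_def, ← ContinuousLinearMap.sSup_unitClosedBall_eq_norm, opNorm]
  congr 1
  ext c
  constructor
  · rintro ⟨v, hv, rfl⟩
    refine ⟨toLp 2 v, ?_, norm_toLp_eq_sqrt (A *ᵥ v)⟩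
    rw [mem_closedBall_zero_iff, norm_toLp_eq_sqrt]
    exact Real.sqrt_le_one.mpr hv
  · rintro ⟨x, hx, rfl⟩
    refine ⟨x.ofLp, ?_, norm_toLp_eq_sqrt (A *ᵥ x.ofLp)⟩
    rw [mem_closedBall_zero_iff, ← toLp_ofLp 2 x, norm_toLp_eq_sqrt] at hx
    simpa using hx

lemma norm_toLp_mulVec_le (A : Matrix m n ℝ) (v : n → ℝ) :
    ‖toLp 2 (A *ᵥ v)‖ ≤ ‖A‖ * ‖toLp 2 v‖ :=
  A.l2_opNorm_mulVec (toLp 2 v)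

lemma l2_opNorm_le_of_forall {A : Matrix m n ℝ} {c : ℝ} (hc : 0 ≤ c)
    (h : ∀ v, ‖toLp 2 (A *ᵥ v)‖ ≤ c * ‖toLp 2 v‖) : ‖A‖ ≤ c := by
  rw [l2_opNorm_def]
  exact ContinuousLinearMap.opNorm_le_bound _ hc fun x => h x.ofLp

lemma mulVec_dotProduct_mulVec_le_of_le {A : Matrix m n ℝ} {c : ℝ} (hA : ‖A‖ ≤ c)
    (v : n → ℝ) : (A *ᵥ v) ⬝ᵥ (A *ᵥ v) ≤ c ^ 2 * (v ⬝ᵥ v) := by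
  rw [← norm_toLp_sq, ← norm_toLp_sq, ← mul_pow]
  exact pow_le_pow_left₀ (norm_nonneg _)
    ((norm_toLp_mulVec_le A v).trans (by gcongr)) 2

lemma l2_opNorm_le_of_forall_sq {A : Matrix m n ℝ} {c : ℝ} (hc : 0 ≤ c)
    (h : ∀ v, (A *ᵥ v) ⬝ᵥ (A *ᵥ v) ≤ c ^ 2 * (v ⬝ᵥ v)) : ‖A‖ ≤ c := by
  refine l2_opNorm_le_of_forall hc fun v => ?_
  rw [← sq_le_sq₀ (norm_nonneg _) (by positivity), mul_pow, norm_toLp_sq, norm_toLp_sq]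
  exact h v

lemma l2_opNorm_le_one_of_orthonormal {Q : Matrix m n ℝ} (hQ : Qᵀ * Q = 1) : ‖Q‖ ≤ 1 :=
  l2_opNorm_le_of_forall zero_le_one fun v => by
    rw [norm_toLp_mulVec_of_orthonormal hQ, one_mul]

lemma l2_opNorm_transpose [DecidableEq m] (A : Matrix m n ℝ) : ‖Aᵀ‖ = ‖A‖ := by
  rw [← conjTranspose_eq_transpose_of_trivial, l2_opNorm_conjTranspose]

lemma l2_opNorm_mul_transpose_le [DecidableEq k] {G : Matrix k n ℝ} (hG : Gᵀ * G = 1)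
    (Q : Matrix m n ℝ) : ‖Q * Gᵀ‖ ≤ ‖Q‖ :=
  (l2_opNorm_mul _ _).trans (mul_le_of_le_one_right (norm_nonneg _)
    ((l2_opNorm_transpose G).trans_le (l2_opNorm_le_one_of_orthonormal hG)))

lemma l2_opNorm_le_one_of_symm_of_idem {E : Matrix n n ℝ} (hsymm : Eᵀ = E) (hidem : E * E = E) :
    ‖E‖ ≤ 1 := by
  have h := l2_opNorm_conjTranspose_mul_self E
  rw [conjTranspose_eq_transpose_of_trivial, hsymm, hidem] at h
  nlinarith [norm_nonneg E]

lemma l2_opNorm_fromBlocks_zero_zero_le [DecidableEq m] {B : Matrix m n ℝ} {C : Matrix n m ℝ}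
    {c : ℝ} (hc : 0 ≤ c) (hB : ‖B‖ ≤ c) (hC : ‖C‖ ≤ c) : ‖fromBlocks 0 B C 0‖ ≤ c := by
  refine l2_opNorm_le_of_forall_sq hc fun v => ?_
  have hv : v ⬝ᵥ v = (v ∘ Sum.inl) ⬝ᵥ (v ∘ Sum.inl) + (v ∘ Sum.inr) ⬝ᵥ (v ∘ Sum.inr) := by
    simp [dotProduct, Fintype.sum_sum_type]
  simp only [fromBlocks_mulVec, zero_mulVec, zero_add, add_zero, sumElim_dotProduct_sumElim, hv]
  linarith [mulVec_dotProduct_mulVec_le_of_le hB (v ∘ Sum.inr),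
    mulVec_dotProduct_mulVec_le_of_le hC (v ∘ Sum.inl)]

lemma l2_opNorm_diagonal_le {d : n → ℝ} {c : ℝ} (hc : 0 ≤ c) (hd : ∀ i, |d i| ≤ c) :
    ‖diagonal d‖ ≤ c := by
  rw [l2_opNorm_diagonal]
  exact (pi_norm_le_iff_of_nonneg hc).2 fun i => (Real.norm_eq_abs _).trans_le (hd i)

lemma mul_norm_le_norm_mul_fromBlocks_diagonal {d : n → ℝ} {c : ℝ} (hc : 0 < c)
    (hd : ∀ i, c ≤ |d i|) (Q : Matrix m (n ⊕ n) ℝ) :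
    c * ‖Q‖ ≤ ‖Q * fromBlocks 0 (diagonal d) (diagonal d) 0‖ := by
  have hinv : fromBlocks 0 (diagonal d) (diagonal d) 0 *
      fromBlocks 0 (diagonal d⁻¹) (diagonal d⁻¹) 0 = 1 := by
    have h : diagonal d * diagonal d⁻¹ = 1 := by
      rw [diagonal_mul_diagonal, ← diagonal_one]
      exact congrArg diagonal (funext fun i => mul_inv_cancel₀ (abs_pos.1 (hc.trans_le (hd i))))
    rw [fromBlocks_multiply]
    simp [h, fromBlocks_one]
  have hdiag : ‖diagonal d⁻¹‖ ≤ c⁻¹ := l2_opNorm_diagonal_le (by positivity) fun i => by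
    rw [Pi.inv_apply, abs_inv]
    exact inv_anti₀ hc (hd i)
  set K := fromBlocks 0 (diagonal d) (diagonal d) 0
  calc c * ‖Q‖ = c * ‖Q * K * fromBlocks 0 (diagonal d⁻¹) (diagonal d⁻¹) 0‖ := by
        rw [Matrix.mul_assoc, hinv, Matrix.mul_one]
    _ ≤ c * (‖Q * K‖ * c⁻¹) := by
      gcongr
      exact (l2_opNorm_mul _ _).trans
        (by gcongr; exact l2_opNorm_fromBlocks_zero_zero_le (by positivity) hdiag hdiag)
    _ = ‖Q * K‖ := by field_simp

end OpNorm

lemma transpose_one_sub_mul_transpose {m k : Type*} [Fintype k] [DecidableEq m]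
    (Q : Matrix m k ℝ) : (1 - Q * Qᵀ)ᵀ = 1 - Q * Qᵀ := by
  rw [transpose_sub, transpose_one, transpose_mul, transpose_transpose]

section Projection

variable {m k : Type*} [Fintype m] [Fintype k] [DecidableEq m]

lemma proj_sub_proj_eq (Θ Θh : Matrix m k ℝ) :
    Θh * Θhᵀ - Θ * Θᵀ = (1 - Θ * Θᵀ) * Θh * Θhᵀ - ((1 - Θh * Θhᵀ) * Θ * Θᵀ)ᵀ := by
  rw [transpose_mul, transpose_mul, transpose_one_sub_mul_transpose, transpose_transpose]
  simp only [Matrix.sub_mul, Matrix.mul_sub, Matrix.one_mul, Matrix.mul_one, Matrix.mul_assoc]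
  abel

variable [DecidableEq k] {Q : Matrix m k ℝ}

lemma one_sub_mul_transpose_mul_self (hQ : Qᵀ * Q = 1) :
    (1 - Q * Qᵀ) * (1 - Q * Qᵀ) = 1 - Q * Qᵀ := by
  rw [Matrix.sub_mul, Matrix.one_mul, Matrix.mul_sub, Matrix.mul_one, Matrix.mul_assoc,
    ← Matrix.mul_assoc Qᵀ, hQ, Matrix.one_mul, sub_self, sub_zero]

lemma one_sub_mul_transpose_mul_eq_zero (hQ : Qᵀ * Q = 1) : (1 - Q * Qᵀ) * Q = 0 := by
  rw [Matrix.sub_mul, Matrix.one_mul, Matrix.mul_assoc, hQ, Matrix.mul_one, sub_self]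

lemma l2_opNorm_one_sub_mul_transpose_le (hQ : Qᵀ * Q = 1) : ‖1 - Q * Qᵀ‖ ≤ 1 :=
  l2_opNorm_le_one_of_symm_of_idem (transpose_one_sub_mul_transpose Q)
    (one_sub_mul_transpose_mul_self hQ)

end Projection

lemma col_mul {m n p : Type*} [Fintype p] (A : Matrix m p ℝ) (B : Matrix p n ℝ) (j : n) :
    (A * B).col j = A *ᵥ B.col j := by
  ext i
  simp [mul_apply, mulVec, dotProduct]

section Frobenius

variable {m n p : Type*} [Fintype m] [Fintype n] [Fintype p]

lemma frobNorm_eq_norm_vec (A : Matrix m n ℝ) : frobNorm A = ‖toLp 2 A.vec‖ := by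
  rw [norm_toLp_eq_sqrt, frobNorm, Fintype.sum_prod_type, Finset.sum_comm]
  rfl

lemma mInner_eq_inner_vec (A B : Matrix m n ℝ) :
    mInner A B = ⟪toLp 2 A.vec, toLp 2 B.vec⟫ := by
  rw [EuclideanSpace.inner_toLp_toLp, mInner, dotProduct, Fintype.sum_prod_type, Finset.sum_comm]
  simp [vec, mul_comm]

lemma frobNorm_nonneg (A : Matrix m n ℝ) : 0 ≤ frobNorm A := Real.sqrt_nonneg _

lemma frobNorm_sq (A : Matrix m n ℝ) : frobNorm A ^ 2 = mInner A A := by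
  rw [frobNorm_eq_norm_vec, mInner_eq_inner_vec, real_inner_self_eq_norm_sq]

lemma frobNorm_eq_zero {A : Matrix m n ℝ} : frobNorm A = 0 ↔ A = 0 := by
  rw [frobNorm_eq_norm_vec, norm_eq_zero, ← toLp_zero 2, (toLp_injective 2).eq_iff,
    vec_eq_zero_iff]

lemma abs_mInner_le (A B : Matrix m n ℝ) : |mInner A B| ≤ frobNorm A * frobNorm B := by
  rw [mInner_eq_inner_vec, frobNorm_eq_norm_vec, frobNorm_eq_norm_vec]
  exact abs_real_inner_le_norm _ _

lemma frobNorm_sub_le (A B : Matrix m n ℝ) : frobNorm (A - B) ≤ frobNorm A + frobNorm B := by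
  simp only [frobNorm_eq_norm_vec, vec_sub, toLp_sub]
  exact norm_sub_le _ _

lemma frobNorm_add_sq (A B : Matrix m n ℝ) :
    frobNorm (A + B) ^ 2 = frobNorm A ^ 2 + 2 * mInner A B + frobNorm B ^ 2 := by
  simp only [frobNorm_eq_norm_vec, mInner_eq_inner_vec, vec_add, toLp_add]
  exact norm_add_sq_real _ _

lemma frobNorm_transpose (A : Matrix m n ℝ) : frobNorm Aᵀ = frobNorm A := by
  rw [frobNorm, frobNorm, Finset.sum_comm]
  rfl

lemma mInner_mul_right (X : Matrix m n ℝ) (Y : Matrix m p ℝ) (Z : Matrix p n ℝ) :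
    mInner X (Y * Z) = mInner (X * Zᵀ) Y := by
  simp only [mInner, mul_apply, transpose_apply, Finset.mul_sum, Finset.sum_mul]
  refine Finset.sum_congr rfl fun i _ => Finset.sum_comm.trans ?_
  exact Finset.sum_congr rfl fun k _ => Finset.sum_congr rfl fun j _ => by ring

lemma frobNorm_sq_eq_sum_col (A : Matrix m n ℝ) :
    frobNorm A ^ 2 = ∑ j, ‖toLp 2 (A.col j)‖ ^ 2 := by
  simp only [norm_toLp_sq, frobNorm_sq, mInner, dotProduct, col_apply]
  exact Finset.sum_comm

lemma frobNorm_add_mul_transpose_sq {X : Matrix m n ℝ} {G : Matrix n p ℝ} (hXG : X * G = 0)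
    (Y : Matrix m p ℝ) : frobNorm (X + Y * Gᵀ) ^ 2 = frobNorm X ^ 2 + frobNorm (Y * Gᵀ) ^ 2 := by
  rw [frobNorm_add_sq, mInner_mul_right, transpose_transpose, hXG]
  simp [mInner]

variable [DecidableEq p]

lemma frobNorm_mul_le_left (A : Matrix m p ℝ) (B : Matrix p n ℝ) :
    frobNorm (A * B) ≤ ‖A‖ * frobNorm B := by
  rw [← sq_le_sq₀ (frobNorm_nonneg _) (mul_nonneg (norm_nonneg _) (frobNorm_nonneg _)), mul_pow,
    frobNorm_sq_eq_sum_col, frobNorm_sq_eq_sum_col, Finset.mul_sum]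
  refine Finset.sum_le_sum fun j _ => ?_
  rw [col_mul, ← mul_pow]
  exact pow_le_pow_left₀ (norm_nonneg _) (norm_toLp_mulVec_le A _) 2

lemma abs_mInner_mul_mul_le (X A B : Matrix p p ℝ) :
    |mInner (X * A * X) B| ≤ ‖X‖ * ‖A‖ * frobNorm X * frobNorm B := by
  refine (abs_mInner_le _ _).trans (mul_le_mul_of_nonneg_right ?_ (frobNorm_nonneg B))
  exact (frobNorm_mul_le_left _ _).trans
    (mul_le_mul_of_nonneg_right (l2_opNorm_mul _ _) (frobNorm_nonneg X))

lemma frobNorm_le_sqrt_card_mul (A : Matrix m p ℝ) :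
    frobNorm A ≤ Real.sqrt (Fintype.card p) * ‖A‖ := by
  rw [← sq_le_sq₀ (frobNorm_nonneg _) (by positivity), mul_pow,
    Real.sq_sqrt (Nat.cast_nonneg _), frobNorm_sq_eq_sum_col]
  calc ∑ j, ‖toLp 2 (A.col j)‖ ^ 2 ≤ ∑ _j : p, ‖A‖ ^ 2 := by
        refine Finset.sum_le_sum fun j _ => pow_le_pow_left₀ (norm_nonneg _) ?_ 2
        simpa [mulVec_single_one] using norm_toLp_mulVec_le A (Pi.single j 1)
    _ = Fintype.card p * ‖A‖ ^ 2 := by simp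

lemma frobNorm_mul_transpose_of_orthonormal {G : Matrix n p ℝ} (hG : Gᵀ * G = 1)
    (Y : Matrix m p ℝ) : frobNorm (Y * Gᵀ) = frobNorm Y := by
  rw [← sq_eq_sq₀ (frobNorm_nonneg _) (frobNorm_nonneg _), frobNorm_sq, frobNorm_sq,
    mInner_mul_right, transpose_transpose, Matrix.mul_assoc, hG, Matrix.mul_one]

end Frobenius

lemma sub_mul_proj_mul_eq_zero {m n k : Type*} [Fintype n] [Fintype k] [DecidableEq k]
    {G : Matrix n k ℝ} (hG : Gᵀ * G = 1) (A : Matrix m n ℝ) : (A - A * G * Gᵀ) * G = 0 := by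
  rw [Matrix.sub_mul, Matrix.mul_assoc (A * G), hG, Matrix.mul_one, sub_self]

lemma rank_mul_mul_transpose_le {m n k : Type*} [Fintype n] [Fintype k] (A : Matrix m n ℝ)
    (G : Matrix n k ℝ) : (A * G * Gᵀ).rank ≤ Fintype.card k :=
  (rank_mul_le_left _ _).trans (rank_le_card_width _)

section BestApprox

variable {m n k : Type*} [Fintype m] [Fintype n] [Fintype k]

def IsBestRankApprox (r : ℕ) (A B : Matrix m n ℝ) : Prop :=
  ∀ B' : Matrix m n ℝ, B'.rank ≤ r → frobNorm (A - B) ≤ frobNorm (A - B')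

variable [DecidableEq k]

def MaximizesFrobNormMul (A : Matrix m n ℝ) (G : Matrix n k ℝ) : Prop :=
  ∀ G' : Matrix n k ℝ, G'ᵀ * G' = 1 → frobNorm (A * G') ≤ frobNorm (A * G)

lemma frobNorm_sub_mul_proj_sq {G : Matrix n k ℝ} (hG : Gᵀ * G = 1) (A : Matrix m n ℝ) :
    frobNorm (A - A * G * Gᵀ) ^ 2 = frobNorm A ^ 2 - frobNorm (A * G) ^ 2 := by
  have h := frobNorm_add_mul_transpose_sq (sub_mul_proj_mul_eq_zero hG A) (A * G)
  rw [sub_add_cancel, frobNorm_mul_transpose_of_orthonormal hG] at h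
  linarith

namespace IsBestRankApprox

variable {r : ℕ} {A : Matrix m n ℝ}

lemma transpose {B : Matrix m n ℝ} (h : IsBestRankApprox r A B) : IsBestRankApprox r Aᵀ Bᵀ :=
  fun B' hB' => by
    have h' := h B'ᵀ (by rwa [rank_transpose])
    rwa [← frobNorm_transpose (A - B), ← frobNorm_transpose (A - B'ᵀ), transpose_sub,
      transpose_sub, transpose_transpose] at h'

lemma mul_eq {W : Matrix m k ℝ} {G : Matrix n k ℝ} (h : IsBestRankApprox r A (W * Gᵀ))
    (hG : Gᵀ * G = 1) (hk : Fintype.card k ≤ r) : A * G = W := by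
  have hsplit := frobNorm_add_mul_transpose_sq (sub_mul_proj_mul_eq_zero hG A) (A * G - W)
  rw [frobNorm_mul_transpose_of_orthonormal hG, Matrix.sub_mul, sub_add_sub_cancel] at hsplit
  have hbest := h _ ((rank_mul_mul_transpose_le A G).trans hk)
  have hbest_sq := pow_le_pow_left₀ (frobNorm_nonneg _) hbest 2
  have hzero : frobNorm (A * G - W) = 0 := by nlinarith [frobNorm_nonneg (A * G - W)]
  exact sub_eq_zero.1 (frobNorm_eq_zero.1 hzero)

lemma transpose_mul_eq {Uh : Matrix m k ℝ} {Vh : Matrix n k ℝ} {sh : k → ℝ}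
    (h : IsBestRankApprox r A (Uh * diagonal sh * Vhᵀ)) (hUh : Uhᵀ * Uh = 1)
    (hk : Fintype.card k ≤ r) : Aᵀ * Uh = Vh * diagonal sh := by
  have h' := h.transpose
  rw [transpose_mul, transpose_mul, diagonal_transpose, transpose_transpose,
    ← Matrix.mul_assoc] at h'
  exact h'.mul_eq hUh hk

lemma maximizesFrobNormMul {W : Matrix m k ℝ} {G : Matrix n k ℝ}
    (h : IsBestRankApprox r A (W * Gᵀ)) (hG : Gᵀ * G = 1) (hk : Fintype.card k ≤ r) :
    MaximizesFrobNormMul A G := by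
  intro G' hG'
  have hbest := h _ ((rank_mul_mul_transpose_le A G').trans hk)
  rw [← h.mul_eq hG hk] at hbest
  have hbest_sq := pow_le_pow_left₀ (frobNorm_nonneg _) hbest 2
  rw [frobNorm_sub_mul_proj_sq hG, frobNorm_sub_mul_proj_sq hG'] at hbest_sq
  exact (sq_le_sq₀ (frobNorm_nonneg (A * G')) (frobNorm_nonneg (A * G))).1 (by linarith)

end IsBestRankApprox

end BestApprox

lemma exists_ne_zero_mulVec_eq_zero_of_rank_lt {p k : Type*} [Fintype k]
    (N : Matrix p k ℝ)
    (h : N.rank < Fintype.card k) : ∃ c ≠ 0, N *ᵥ c = 0 := by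
  have hrn := LinearMap.finrank_range_add_finrank_ker N.mulVecLin
  rw [Module.finrank_fintype_fun_eq_card] at hrn
  have hker : LinearMap.ker N.mulVecLin ≠ ⊥ := by
    intro hbot
    rw [hbot, finrank_bot] at hrn
    rw [rank] at h
    omega
  obtain ⟨c, hc, hcne⟩ := Submodule.exists_mem_ne_zero_of_ne_bot hker
  exact ⟨c, hcne, hc⟩

lemma exists_mulVec_add_smul_eq_zero {m n k : Type*} [Fintype n] [Fintype k]
    {M : Matrix m n ℝ} (hM : M.rank ≤ Fintype.card k)
    (Vh : Matrix n k ℝ) (x : n → ℝ) :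
    ∃ (a : k → ℝ) (b : ℝ), (a ≠ 0 ∨ b ≠ 0) ∧ M *ᵥ (Vh *ᵥ a + b • x) = 0 := by
  let N : Matrix n (k ⊕ Unit) ℝ := fromCols Vh (replicateCol Unit x)
  have hrank : (M * N).rank < Fintype.card (k ⊕ Unit) := by
    rw [Fintype.card_sum, Fintype.card_unit]
    exact Nat.lt_succ_of_le ((rank_mul_le_left M N).trans hM)
  obtain ⟨c, hc0, hc⟩ := exists_ne_zero_mulVec_eq_zero_of_rank_lt (M * N) hrank
  refine ⟨c ∘ Sum.inl, c (Sum.inr ()), ?_, ?_⟩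
  · by_contra! h
    exact hc0 (funext fun | .inl i => congrFun h.1 i | .inr () => h.2)
  · rw [← hc, ← mulVec_mulVec]
    congr 1
    ext i
    simp [N, mulVec, dotProduct, mul_comm]

lemma transpose_mul_self_eq_one_iff {n k : Type*} [Fintype n] [DecidableEq k] {G : Matrix n k ℝ} :
    Gᵀ * G = 1 ↔ ∀ a b, G.col a ⬝ᵥ G.col b = (1 : Matrix k k ℝ) a b := by
  rw [← Matrix.ext_iff]
  rfl

lemma mul_norm_le_norm_diagonal_mulVec {k : Type*} [Fintype k] [DecidableEq k] {s : k → ℝ} {lam : ℝ}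
    (hlam : 0 ≤ lam) (hs : ∀ i, lam ≤ s i) (w : k → ℝ) :
    lam * ‖toLp 2 w‖ ≤ ‖toLp 2 (diagonal s *ᵥ w)‖ := by
  rw [← sq_le_sq₀ (by positivity) (norm_nonneg _), mul_pow, norm_toLp_sq, norm_toLp_sq,
    dotProduct, dotProduct, Finset.mul_sum]
  refine Finset.sum_le_sum fun i _ => ?_
  rw [mulVec_diagonal]
  nlinarith [mul_self_le_mul_self hlam (hs i), mul_self_nonneg (w i)]

lemma exists_ne_zero_orthogonal_of_ne {n k : Type*} [Fintype n] [Fintype k] [DecidableEq k]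
    (V Vh : Matrix n k ℝ) (j : k) : ∃ w ≠ 0, ∀ l ≠ j, Vh.col l ⬝ᵥ (V *ᵥ w) = 0 := by
  let N : Matrix {l // l ≠ j} k ℝ := of fun l => (Vhᵀ * V) l
  have hcard : Fintype.card {l // l ≠ j} < Fintype.card k :=
    Fintype.card_subtype_lt (p := (· ≠ j)) (not_not.2 rfl)
  obtain ⟨w, hw0, hw⟩ :=
    exists_ne_zero_mulVec_eq_zero_of_rank_lt N ((rank_le_card_height N).trans_lt hcard)
  refine ⟨w, hw0, fun l hl => ?_⟩
  have h : ((Vhᵀ * V) *ᵥ w) l = 0 := congrFun hw ⟨l, hl⟩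
  rw [← mulVec_mulVec] at h
  exact h

namespace MaximizesFrobNormMul

variable {m n k : Type*} [Fintype m] [Fintype n] [Fintype k] [DecidableEq k]
  {A : Matrix m n ℝ} {G : Matrix n k ℝ}

lemma norm_mulVec_le_of_unit (hmax : MaximizesFrobNormMul A G) (hG : Gᵀ * G = 1) {j : k}
    {x : n → ℝ} (hx : ∀ l ≠ j, G.col l ⬝ᵥ x = 0) (hx1 : x ⬝ᵥ x = 1) :
    ‖toLp 2 (A *ᵥ x)‖ ≤ ‖toLp 2 (A *ᵥ G.col j)‖ := by
  -- replacing the `j`-th column of `G` by `x` keeps the columns orthonormal and changes only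
  -- the `j`-th term of `‖A G‖_F² = ∑ₗ ‖A gₗ‖²`
  set G' : Matrix n k ℝ := (of (Function.update G.col j x))ᵀ
  have hcol : G'.col = Function.update G.col j x := rfl
  have hG' : G'ᵀ * G' = 1 := by
    rw [transpose_mul_self_eq_one_iff] at hG ⊢
    intro a b
    rw [hcol]
    by_cases ha : a = j <;> by_cases hb : b = j
    · simpa [ha, hb, one_apply] using hx1
    · simpa [ha, hb, one_apply, Ne.symm hb, dotProduct_comm] using hx b hb
    · simpa [ha, hb, one_apply] using hx a ha
    · simpa [ha, hb] using hG a b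
  have hsq := pow_le_pow_left₀ (frobNorm_nonneg _) (hmax G' hG') 2
  simp only [frobNorm_sq_eq_sum_col, col_mul, hcol] at hsq
  rw [← Finset.add_sum_erase _ _ (Finset.mem_univ j),
    ← Finset.add_sum_erase _ _ (Finset.mem_univ j), Function.update_self] at hsq
  have hrest : ∑ l ∈ Finset.univ.erase j, ‖toLp 2 (A *ᵥ Function.update G.col j x l)‖ ^ 2 =
      ∑ l ∈ Finset.univ.erase j, ‖toLp 2 (A *ᵥ G.col l)‖ ^ 2 :=
    Finset.sum_congr rfl fun l hl => by rw [Function.update_of_ne (Finset.ne_of_mem_erase hl)]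
  exact (sq_le_sq₀ (norm_nonneg _) (norm_nonneg _)).1 (by linarith)

lemma norm_mulVec_le (hmax : MaximizesFrobNormMul A G) (hG : Gᵀ * G = 1) {j : k}
    {x : n → ℝ} (hx : ∀ l ≠ j, G.col l ⬝ᵥ x = 0) :
    ‖toLp 2 (A *ᵥ x)‖ ≤ ‖toLp 2 (A *ᵥ G.col j)‖ * ‖toLp 2 x‖ := by
  rcases eq_or_ne x 0 with rfl | hx0
  · simp
  have hc : 0 < ‖toLp 2 x‖ := norm_pos_iff.2 fun h => hx0 (by simpa using h)
  have hunit := hmax.norm_mulVec_le_of_unit hG (x := ‖toLp 2 x‖⁻¹ • x)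
    (fun l hl => by rw [dotProduct_smul, hx l hl, smul_zero])
    (by rw [smul_dotProduct, dotProduct_smul, ← norm_toLp_sq, smul_eq_mul, smul_eq_mul]
        field_simp)
  rw [mulVec_smul, toLp_smul, norm_smul, norm_inv, norm_norm, inv_mul_le_iff₀ hc] at hunit
  linarith

variable {Uh : Matrix m k ℝ} {sh : k → ℝ}

lemma norm_mulVec_le_abs (hmax : MaximizesFrobNormMul A G) (hG : Gᵀ * G = 1)
    (hUh : Uhᵀ * Uh = 1) (hAG : A * G = Uh * diagonal sh) {j : k} {x : n → ℝ}
    (hx : ∀ l ≠ j, G.col l ⬝ᵥ x = 0) : ‖toLp 2 (A *ᵥ x)‖ ≤ |sh j| * ‖toLp 2 x‖ := by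
  have hcol : ‖toLp 2 (A *ᵥ G.col j)‖ = |sh j| := by
    rw [← col_mul, hAG, col_mul, col_diagonal, norm_toLp_mulVec_of_orthonormal hUh]
    simp
  exact hcol ▸ hmax.norm_mulVec_le hG hx

variable [DecidableEq n] {M : Matrix m n ℝ}

lemma sub_norm_sub_le_abs (hmax : MaximizesFrobNormMul A G) (hG : Gᵀ * G = 1)
    (hUh : Uhᵀ * Uh = 1) (hAG : A * G = Uh * diagonal sh) {U : Matrix m k ℝ}
    {V : Matrix n k ℝ} {s : k → ℝ} {lam : ℝ} (hU : Uᵀ * U = 1) (hV : Vᵀ * V = 1)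
    (hM : M = U * diagonal s * Vᵀ) (hlam : 0 ≤ lam) (hs : ∀ i, lam ≤ s i) (j : k) :
    lam - ‖A - M‖ ≤ |sh j| := by
  obtain ⟨w, hw0, hw⟩ := exists_ne_zero_orthogonal_of_ne V G j
  have hwpos : 0 < ‖toLp 2 w‖ := norm_pos_iff.2 fun h => hw0 (by simpa using h)
  have hx : ‖toLp 2 (V *ᵥ w)‖ = ‖toLp 2 w‖ := norm_toLp_mulVec_of_orthonormal hV w
  have hAx : ‖toLp 2 (A *ᵥ (V *ᵥ w))‖ ≤ |sh j| * ‖toLp 2 w‖ :=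
    hx ▸ hmax.norm_mulVec_le_abs hG hUh hAG hw
  have hMx : lam * ‖toLp 2 w‖ ≤ ‖toLp 2 (M *ᵥ (V *ᵥ w))‖ := by
    rw [hM, mulVec_mulVec, Matrix.mul_assoc (U * diagonal s), hV, Matrix.mul_one,
      ← mulVec_mulVec, norm_toLp_mulVec_of_orthonormal hU]
    exact mul_norm_le_norm_diagonal_mulVec hlam hs w
  have hMA : ‖toLp 2 (M *ᵥ (V *ᵥ w))‖ ≤ ‖toLp 2 (A *ᵥ (V *ᵥ w))‖ + ‖A - M‖ * ‖toLp 2 w‖ := by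
    rw [← hx, ← sub_sub_cancel (A *ᵥ (V *ᵥ w)) (M *ᵥ (V *ᵥ w)), ← sub_mulVec, toLp_sub]
    exact (norm_sub_le _ _).trans (by gcongr; exact norm_toLp_mulVec_le _ _)
  have h : (lam - ‖A - M‖) * ‖toLp 2 w‖ ≤ |sh j| * ‖toLp 2 w‖ := by linarith
  exact le_of_mul_le_mul_right h hwpos

lemma norm_mulVec_le_of_transpose_mulVec_eq_zero (hmax : MaximizesFrobNormMul A G)
    (hG : Gᵀ * G = 1) (hUh : Uhᵀ * Uh = 1) (hAG : A * G = Uh * diagonal sh)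
    (hAU : Aᵀ * Uh = G * diagonal sh) (hM : M.rank ≤ Fintype.card k) {x : n → ℝ}
    (hx : Gᵀ *ᵥ x = 0) : ‖toLp 2 (A *ᵥ x)‖ ≤ ‖A - M‖ * ‖toLp 2 x‖ := by
  rcases eq_or_ne x 0 with rfl | hx0
  · simp
  -- some `y = G a + b x ≠ 0` lies in `ker M`, so `‖A y‖ ≤ ‖A - M‖ ‖y‖`; on the other hand `A`
  -- maps the orthogonal pieces `G a` and `b x` to orthogonal pieces, stretching each by at
  -- least `‖A x‖ / ‖x‖`
  have hξ : 0 < x ⬝ᵥ x := by simpa using dotProduct_star_self_pos_iff.2 hx0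
  have hS : ∀ j, (A *ᵥ x) ⬝ᵥ (A *ᵥ x) ≤ sh j ^ 2 * (x ⬝ᵥ x) := fun j => by
    have h := hmax.norm_mulVec_le_abs hG hUh hAG (j := j) (fun l _ => congrFun hx l)
    rw [← norm_toLp_sq, ← norm_toLp_sq, ← sq_abs (sh j), ← mul_pow]
    exact pow_le_pow_left₀ (norm_nonneg _) h 2
  set ρ := (A *ᵥ x) ⬝ᵥ (A *ᵥ x)
  set ξ := x ⬝ᵥ x
  obtain ⟨a, b, hab, hMy⟩ := exists_mulVec_add_smul_eq_zero hM G x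
  set y := G *ᵥ a + b • x
  have hUx : Uhᵀ *ᵥ (A *ᵥ x) = 0 := by
    rw [mulVec_mulVec, ← transpose_transpose (Uhᵀ * A), transpose_mul, transpose_transpose, hAU,
      transpose_mul, diagonal_transpose, ← mulVec_mulVec, hx, mulVec_zero]
  have hy : y ⬝ᵥ y = a ⬝ᵥ a + b ^ 2 * ξ := mulVec_add_smul_dotProduct_self hG hx a b
  have hAy : (A *ᵥ y) ⬝ᵥ (A *ᵥ y) =
      (diagonal sh *ᵥ a) ⬝ᵥ (diagonal sh *ᵥ a) + b ^ 2 * ρ := by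
    rw [mulVec_add, mulVec_smul, mulVec_mulVec, hAG, ← mulVec_mulVec]
    exact mulVec_add_smul_dotProduct_self hUh hUx _ b
  have hSa : ρ * (a ⬝ᵥ a) ≤ ξ * ((diagonal sh *ᵥ a) ⬝ᵥ (diagonal sh *ᵥ a)) := by
    simp only [dotProduct, mulVec_diagonal, Finset.mul_sum]
    exact Finset.sum_le_sum fun i _ => by nlinarith [hS i, mul_self_nonneg (a i)]
  have hAM : (A *ᵥ y) ⬝ᵥ (A *ᵥ y) ≤ ‖A - M‖ ^ 2 * (y ⬝ᵥ y) := by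
    rw [← sub_zero (A *ᵥ y), ← hMy, ← sub_mulVec]
    exact mulVec_dotProduct_mulVec_le_of_le le_rfl _
  have hypos : 0 < y ⬝ᵥ y := by
    rw [hy]
    rcases hab with ha | hb
    · have := dotProduct_star_self_pos_iff.2 ha
      simp only [star_trivial] at this
      positivity
    · have := dotProduct_self_star_nonneg a
      positivity
  rw [← sq_le_sq₀ (norm_nonneg _) (by positivity), mul_pow, norm_toLp_sq, norm_toLp_sq]
  refine le_of_mul_le_mul_right ?_ hypos
  calc ρ * (y ⬝ᵥ y) = ρ * (a ⬝ᵥ a) + b ^ 2 * ρ * ξ := by rw [hy]; ring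
    _ ≤ ξ * ((diagonal sh *ᵥ a) ⬝ᵥ (diagonal sh *ᵥ a)) + b ^ 2 * ρ * ξ := by linarith
    _ = ξ * ((A *ᵥ y) ⬝ᵥ (A *ᵥ y)) := by rw [hAy]; ring
    _ ≤ ξ * (‖A - M‖ ^ 2 * (y ⬝ᵥ y)) := mul_le_mul_of_nonneg_left hAM hξ.le
    _ = ‖A - M‖ ^ 2 * ξ * (y ⬝ᵥ y) := by ring

lemma l2_opNorm_sub_mul_mul_transpose_le (hmax : MaximizesFrobNormMul A G) (hG : Gᵀ * G = 1)
    (hUh : Uhᵀ * Uh = 1) (hAG : A * G = Uh * diagonal sh) (hAU : Aᵀ * Uh = G * diagonal sh)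
    (hM : M.rank ≤ Fintype.card k) : ‖A - A * G * Gᵀ‖ ≤ ‖A - M‖ := by
  refine l2_opNorm_le_of_forall (norm_nonneg _) fun v => ?_
  have hperp : Gᵀ *ᵥ ((1 - G * Gᵀ) *ᵥ v) = 0 := by
    rw [mulVec_mulVec, ← transpose_one_sub_mul_transpose, ← transpose_mul,
      one_sub_mul_transpose_mul_eq_zero hG, transpose_zero, zero_mulVec]
  have hv : ‖toLp 2 ((1 - G * Gᵀ) *ᵥ v)‖ ≤ ‖toLp 2 v‖ :=
    (norm_toLp_mulVec_le _ _).trans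
      (mul_le_of_le_one_left (norm_nonneg _) (l2_opNorm_one_sub_mul_transpose_le hG))
  have hfactor : A - A * G * Gᵀ = A * (1 - G * Gᵀ) := by
    rw [Matrix.mul_sub, Matrix.mul_one, Matrix.mul_assoc]
  rw [hfactor, ← mulVec_mulVec]
  calc ‖toLp 2 (A *ᵥ ((1 - G * Gᵀ) *ᵥ v))‖ ≤ ‖A - M‖ * ‖toLp 2 ((1 - G * Gᵀ) *ᵥ v)‖ :=
        hmax.norm_mulVec_le_of_transpose_mulVec_eq_zero hG hUh hAG hAU hM hperp
    _ ≤ ‖A - M‖ * ‖toLp 2 v‖ := by gcongr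

end MaximizesFrobNormMul

section SinTheta

variable {ι κ : Type*} [Fintype ι] [Fintype κ] [DecidableEq ι] [DecidableEq κ]
  {Θ Θh : Matrix ι κ ℝ} {A Ah : Matrix ι ι ℝ} {K Kh : Matrix κ κ ℝ} {c : ℝ}

lemma mul_norm_one_sub_proj_mul_le_norm_sub (hΘ : Θᵀ * Θ = 1) (hΘh : Θhᵀ * Θh = 1)
    (hPA : Θ * Θᵀ * A = A) (hAh : Ah * Θh = Θh * Kh)
    (hKh : ∀ Q : Matrix ι κ ℝ, c * ‖Q‖ ≤ ‖Q * Kh‖) :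
    c * ‖(1 - Θ * Θᵀ) * Θh‖ ≤ ‖Ah - A‖ := by
  have hperp : (1 - Θ * Θᵀ) * A = 0 := by rw [Matrix.sub_mul, Matrix.one_mul, hPA, sub_self]
  calc c * ‖(1 - Θ * Θᵀ) * Θh‖ ≤ ‖(1 - Θ * Θᵀ) * Θh * Kh‖ := hKh _
    _ = ‖(1 - Θ * Θᵀ) * (Ah - A) * Θh‖ := by
      rw [Matrix.mul_assoc, ← hAh, Matrix.mul_sub, hperp, sub_zero, Matrix.mul_assoc]
    _ ≤ ‖1 - Θ * Θᵀ‖ * ‖Ah - A‖ * ‖Θh‖ :=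
      (l2_opNorm_mul _ _).trans (by gcongr; exact l2_opNorm_mul _ _)
    _ ≤ 1 * ‖Ah - A‖ * 1 := by
      gcongr
      exacts [l2_opNorm_one_sub_mul_transpose_le hΘ, l2_opNorm_le_one_of_orthonormal hΘh]
    _ = ‖Ah - A‖ := by ring

lemma mul_norm_one_sub_proj_mul_le_add (hΘ : Θᵀ * Θ = 1) (hΘh : Θhᵀ * Θh = 1)
    (hA : A * Θ = Θ * K) (hAh : Ah * Θh = Θh * Kh) (hK : ∀ Q : Matrix ι κ ℝ, c * ‖Q‖ ≤ ‖Q * K‖) :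
    c * ‖(1 - Θh * Θhᵀ) * Θ‖ ≤
      ‖Ah * (1 - Θh * Θhᵀ)‖ * ‖(1 - Θh * Θhᵀ) * Θ‖ + ‖Ah - A‖ := by
  set P := 1 - Θh * Θhᵀ
  have hPP : P * P = P := one_sub_mul_transpose_mul_self hΘh
  have hPΘh : P * Θh = 0 := one_sub_mul_transpose_mul_eq_zero hΘh
  have hP1 : ‖P‖ ≤ 1 := l2_opNorm_one_sub_mul_transpose_le hΘh
  -- `P Â (1 - P) = P Θ̂ K̂ Θ̂ᵀ = 0`
  have hPAh : P * Ah * P = P * Ah := by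
    change P * Ah * (1 - Θh * Θhᵀ) = P * Ah
    rw [Matrix.mul_sub, Matrix.mul_one, ← Matrix.mul_assoc, Matrix.mul_assoc P, hAh,
      ← Matrix.mul_assoc, hPΘh, Matrix.zero_mul, Matrix.zero_mul, sub_zero]
  clear_value P
  have hsplit : P * Θ * K = P * (Ah * P) * (P * Θ) - P * (Ah - A) * Θ := by
    rw [← Matrix.mul_assoc P Ah P, ← Matrix.mul_assoc, Matrix.mul_assoc (P * Ah) P P, hPP, hPAh,
      Matrix.mul_sub, Matrix.sub_mul, sub_sub_cancel, Matrix.mul_assoc P A, hA, Matrix.mul_assoc]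
  calc c * ‖P * Θ‖ ≤ ‖P * Θ * K‖ := hK _
    _ ≤ ‖P‖ * ‖Ah * P‖ * ‖P * Θ‖ + ‖P‖ * ‖Ah - A‖ * ‖Θ‖ := by
      rw [hsplit]
      refine (norm_sub_le _ _).trans (add_le_add ?_ ?_) <;>
        exact (l2_opNorm_mul _ _).trans (by gcongr; exact l2_opNorm_mul _ _)
    _ ≤ 1 * ‖Ah * P‖ * ‖P * Θ‖ + 1 * ‖Ah - A‖ * 1 := by
      gcongr
      exact l2_opNorm_le_one_of_orthonormal hΘ
    _ = ‖Ah * P‖ * ‖P * Θ‖ + ‖Ah - A‖ := by ring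

lemma norm_proj_sub_proj_le (hΘ : Θᵀ * Θ = 1) (hΘh : Θhᵀ * Θh = 1) :
    ‖Θh * Θhᵀ - Θ * Θᵀ‖ ≤ ‖(1 - Θ * Θᵀ) * Θh‖ + ‖(1 - Θh * Θhᵀ) * Θ‖ := by
  rw [proj_sub_proj_eq]
  refine (norm_sub_le _ _).trans (add_le_add (l2_opNorm_mul_transpose_le hΘh _) ?_)
  rw [l2_opNorm_transpose]
  exact l2_opNorm_mul_transpose_le hΘ _

lemma frobNorm_proj_sub_proj_le (hΘ : Θᵀ * Θ = 1) (hΘh : Θhᵀ * Θh = 1) :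
    frobNorm (Θh * Θhᵀ - Θ * Θᵀ) ≤
      Real.sqrt (Fintype.card κ) * (‖(1 - Θ * Θᵀ) * Θh‖ + ‖(1 - Θh * Θhᵀ) * Θ‖) := by
  rw [proj_sub_proj_eq, mul_add]
  refine (frobNorm_sub_le _ _).trans (add_le_add ?_ ?_)
  · rw [frobNorm_mul_transpose_of_orthonormal hΘh]
    exact frobNorm_le_sqrt_card_mul _
  · rw [frobNorm_transpose, frobNorm_mul_transpose_of_orthonormal hΘ]
    exact frobNorm_le_sqrt_card_mul _

end SinTheta

section Dilation

variable {U Uh : Matrix (Fin d1) (Fin r) ℝ} {V Vh : Matrix (Fin d2) (Fin r) ℝ}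

lemma ThetaMat_transpose_mul_self (hU : Uᵀ * U = 1) (hV : Vᵀ * V = 1) :
    (ThetaMat U V)ᵀ * ThetaMat U V = 1 := by
  rw [ThetaMat, fromBlocks_transpose, fromBlocks_multiply]
  simp [hU, hV, fromBlocks_one]

lemma dilation_mul_diagonal_mul_transpose (U : Matrix (Fin d1) (Fin r) ℝ)
    (V : Matrix (Fin d2) (Fin r) ℝ) (s : Fin r → ℝ) :
    dilation (U * diagonal s * Vᵀ) =
      ThetaMat U V * fromBlocks 0 (diagonal s) (diagonal s) 0 * (ThetaMat U V)ᵀ := by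
  rw [dilation, ThetaMat, fromBlocks_transpose, fromBlocks_multiply, fromBlocks_multiply]
  simp [transpose_mul, Matrix.mul_assoc]

lemma dilation_mul_ThetaMat {X : Matrix (Fin d1) (Fin d2) ℝ} {s : Fin r → ℝ}
    (hXV : X * V = U * diagonal s) (hXU : Xᵀ * U = V * diagonal s) :
    dilation X * ThetaMat U V = ThetaMat U V * fromBlocks 0 (diagonal s) (diagonal s) 0 := by
  rw [dilation, ThetaMat, fromBlocks_multiply, fromBlocks_multiply]
  simp [hXV, hXU]

lemma dilation_sub (X Y : Matrix (Fin d1) (Fin d2) ℝ) :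
    dilation X - dilation Y = dilation (X - Y) := by
  ext (i | i) (j | j) <;> simp [dilation]

lemma l2_opNorm_dilation_le (X : Matrix (Fin d1) (Fin d2) ℝ) : ‖dilation X‖ ≤ ‖X‖ :=
  l2_opNorm_fromBlocks_zero_zero_le (norm_nonneg X) le_rfl (l2_opNorm_transpose X).le

lemma frobNorm_Ttil (T : Matrix (Fin d1) (Fin d2) ℝ) : frobNorm (Ttil T) = frobNorm T := by
  simp [frobNorm, Ttil, Fintype.sum_sum_type]

end Dilation

section SVD

variable {M A : Matrix (Fin d1) (Fin d2) ℝ} {U Uh : Matrix (Fin d1) (Fin r) ℝ}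
  {V Vh : Matrix (Fin d2) (Fin r) ℝ} {s sh : Fin r → ℝ} {lam z : ℝ}

lemma sinTheta_bound_of_singular_vectors (hU : Uᵀ * U = 1) (hV : Vᵀ * V = 1)
    (hM : M = U * diagonal s * Vᵀ) (hs : ∀ i, lam ≤ s i) (hlam : 0 < lam) (hUh : Uhᵀ * Uh = 1)
    (hVh : Vhᵀ * Vh = 1) (hAV : A * Vh = Uh * diagonal sh) (hAU : Aᵀ * Uh = Vh * diagonal sh)
    (hsh : ∀ j, lam / 2 ≤ |sh j|) (hAM : ‖A - M‖ ≤ z) (hres : ‖A - A * Vh * Vhᵀ‖ ≤ z)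
    (hz : 2 * z ≤ lam) :
    lam * (‖(1 - ThetaMat U V * (ThetaMat U V)ᵀ) * ThetaMat Uh Vh‖ +
      ‖(1 - ThetaMat Uh Vh * (ThetaMat Uh Vh)ᵀ) * ThetaMat U V‖) ≤ 4 * z := by
  set Θ := ThetaMat U V
  set Θh := ThetaMat Uh Vh
  have hΘ : Θᵀ * Θ = 1 := ThetaMat_transpose_mul_self hU hV
  have hΘh : Θhᵀ * Θh = 1 := ThetaMat_transpose_mul_self hUh hVh
  have hdilM := dilation_mul_diagonal_mul_transpose U V s
  rw [← hM] at hdilM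
  have hdilA := dilation_mul_ThetaMat hAV hAU
  have hdiff : ‖dilation A - dilation M‖ ≤ z := by
    rw [dilation_sub]
    exact (l2_opNorm_dilation_le _).trans hAM
  have hresd : ‖dilation A * (1 - Θh * Θhᵀ)‖ ≤ z := by
    rw [Matrix.mul_sub, Matrix.mul_one, ← Matrix.mul_assoc, hdilA,
      ← dilation_mul_diagonal_mul_transpose, ← hAV, dilation_sub]
    exact (l2_opNorm_dilation_le _).trans hres
  have hPM : Θ * Θᵀ * dilation M = dilation M := by
    rw [hdilM, ← Matrix.mul_assoc, ← Matrix.mul_assoc, Matrix.mul_assoc Θ Θᵀ Θ, hΘ,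
      Matrix.mul_one]
  have hMΘ : dilation M * Θ = Θ * fromBlocks 0 (diagonal s) (diagonal s) 0 := by
    rw [hdilM, Matrix.mul_assoc, hΘ, Matrix.mul_one]
  have h1 := mul_norm_one_sub_proj_mul_le_norm_sub hΘ hΘh hPM hdilA
    (mul_norm_le_norm_mul_fromBlocks_diagonal (half_pos hlam) hsh)
  have h2 := mul_norm_one_sub_proj_mul_le_add hΘ hΘh hMΘ hdilA
    (mul_norm_le_norm_mul_fromBlocks_diagonal hlam fun i => (hs i).trans (le_abs_self _))
  have h3 := mul_le_mul_of_nonneg_right hresd (norm_nonneg ((1 - Θh * Θhᵀ) * Θ))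
  nlinarith [norm_nonneg ((1 - Θh * Θhᵀ) * Θ)]

theorem sinTheta_bound {Zhat : Matrix (Fin d1) (Fin d2) ℝ} (hU : Uᵀ * U = 1) (hV : Vᵀ * V = 1)
    (hM : M = U * diagonal s * Vᵀ) (hs : ∀ i, lam ≤ s i) (hlam : 0 < lam) (hUh : Uhᵀ * Uh = 1)
    (hVh : Vhᵀ * Vh = 1) (hbest : IsBestRankApprox r (M + Zhat) (Uh * diagonal sh * Vhᵀ))
    (hZ : 2 * ‖Zhat‖ ≤ lam) :
    lam * (‖(1 - ThetaMat U V * (ThetaMat U V)ᵀ) * ThetaMat Uh Vh‖ +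
      ‖(1 - ThetaMat Uh Vh * (ThetaMat Uh Vh)ᵀ) * ThetaMat U V‖) ≤ 4 * ‖Zhat‖ := by
  have hk : Fintype.card (Fin r) ≤ r := (Fintype.card_fin r).le
  have hAV := hbest.mul_eq hVh hk
  have hAU := hbest.transpose_mul_eq hUh hk
  have hmax := hbest.maximizesFrobNormMul hVh hk
  have hAM : ‖M + Zhat - M‖ = ‖Zhat‖ := by rw [add_sub_cancel_left]
  have hrank : M.rank ≤ Fintype.card (Fin r) :=
    hM ▸ (rank_mul_le_left _ _).trans (rank_le_card_width _)
  refine sinTheta_bound_of_singular_vectors hU hV hM hs hlam hUh hVh hAV hAU (fun j => ?_)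
    hAM.le (hAM ▸ hmax.l2_opNorm_sub_mul_mul_transpose_le hVh hUh hAV hAU hrank) hZ
  linarith [hmax.sub_norm_sub_le_abs hVh hUh hAV hU hV hM hlam.le hs j]

lemma abs_mInner_quadratic_le (hU : Uᵀ * U = 1) (hV : Vᵀ * V = 1) (hUh : Uhᵀ * Uh = 1)
    (hVh : Vhᵀ * Vh = 1) (hM : ‖M‖ ≤ 1) (T : Matrix (Fin d1) (Fin d2) ℝ) :
    |mInner ((ThetaMat Uh Vh * (ThetaMat Uh Vh)ᵀ - ThetaMat U V * (ThetaMat U V)ᵀ) *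
        dilation M * (ThetaMat Uh Vh * (ThetaMat Uh Vh)ᵀ - ThetaMat U V * (ThetaMat U V)ᵀ))
        (Ttil T)| ≤
      Real.sqrt 2 * Real.sqrt r * frobNorm T *
        (‖(1 - ThetaMat U V * (ThetaMat U V)ᵀ) * ThetaMat Uh Vh‖ +
          ‖(1 - ThetaMat Uh Vh * (ThetaMat Uh Vh)ᵀ) * ThetaMat U V‖) ^ 2 := by
  set Θ := ThetaMat U V
  set Θh := ThetaMat Uh Vh
  have hΘ : Θᵀ * Θ = 1 := ThetaMat_transpose_mul_self hU hV
  have hΘh : Θhᵀ * Θh = 1 := ThetaMat_transpose_mul_self hUh hVh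
  have hX := norm_proj_sub_proj_le hΘ hΘh
  have hXF := frobNorm_proj_sub_proj_le hΘ hΘh
  rw [Fintype.card_sum, Fintype.card_fin, Nat.cast_add, ← two_mul,
    Real.sqrt_mul zero_le_two] at hXF
  have hA : ‖dilation M‖ ≤ 1 := (l2_opNorm_dilation_le M).trans hM
  have := frobNorm_nonneg T
  have := frobNorm_nonneg (Θh * Θhᵀ - Θ * Θᵀ)
  calc _ ≤ ‖Θh * Θhᵀ - Θ * Θᵀ‖ * ‖dilation M‖ * frobNorm (Θh * Θhᵀ - Θ * Θᵀ) *
        frobNorm (Ttil T) := abs_mInner_mul_mul_le _ _ _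
    _ ≤ (‖(1 - Θ * Θᵀ) * Θh‖ + ‖(1 - Θh * Θhᵀ) * Θ‖) * 1 *
        (Real.sqrt 2 * Real.sqrt r * (‖(1 - Θ * Θᵀ) * Θh‖ + ‖(1 - Θh * Θhᵀ) * Θ‖)) *
        frobNorm T := by
      rw [frobNorm_Ttil]
      gcongr
    _ = _ := by ring

end SVD

/-- **Lemma A.7 (quadratic term of the spectral projection perturbation).**
With `‖M‖ = 1`, `κ = 1/λ_r`, `λ_r ≥ 2‖Ẑ‖` and `‖Ẑ‖ ≤ C₁(2/ε)σ√(d log d/n)` (the event of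
Lemma A.1), and with `Θ̂ = blockdiag(Û, V̂)` built from the top-r singular vectors of
`M̂^unbs_n = M + Ẑ`, there is an absolute constant `C₅` such that
`|⟨(Θ̂Θ̂ᵀ − ΘΘᵀ) A (Θ̂Θ̂ᵀ − ΘΘᵀ), T̃⟩|
  ≤ C₅ (4/ε²) ‖T‖_F κ σ √(d r log d/n) (σ/λ_r) √(d log d/n)`. -/
theorem quadratic_spectral_perturbation_bound :
    ∀ C₁ : ℝ, 0 < C₁ → ∃ C₅ : ℝ, 0 < C₅ ∧
    ∀ (d1 d2 r n : ℕ) (ε σ lamr κ : ℝ)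
      (M T Zhat : Matrix (Fin d1) (Fin d2) ℝ)
      (U : Matrix (Fin d1) (Fin r) ℝ) (V : Matrix (Fin d2) (Fin r) ℝ) (sval : Fin r → ℝ)
      (Uh : Matrix (Fin d1) (Fin r) ℝ) (Vh : Matrix (Fin d2) (Fin r) ℝ) (sh : Fin r → ℝ),
      0 < d1 → 0 < d2 → 0 < r → 0 < n → 0 < ε → ε < 1 → 0 < σ → 0 < lamr →
      -- rank-r SVD structure of `M` with `‖M‖ = 1` and `κ = 1/λ_r`
      Uᵀ * U = 1 → Vᵀ * V = 1 →
      M = U * Matrix.diagonal sval * Vᵀ →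
      (∀ j, lamr ≤ sval j ∧ sval j ≤ 1) → opNorm M = 1 → κ = 1 / lamr →
      -- `Û, V̂` are the top-r singular vectors of `M̂^unbs_n = M + Ẑ`
      Uhᵀ * Uh = 1 → Vhᵀ * Vh = 1 →
      (∀ B : Matrix (Fin d1) (Fin d2) ℝ, B.rank ≤ r →
        frobNorm ((M + Zhat) - Uh * Matrix.diagonal sh * Vhᵀ) ≤ frobNorm ((M + Zhat) - B)) →
      -- conditions of Lemma A.2 and the quantitative event of Lemma A.1
      2 * opNorm Zhat ≤ lamr →
      opNorm Zhat ≤ C₁ * (2 / ε) * σ *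
        Real.sqrt ((max d1 d2 : ℝ) * Real.log (max d1 d2 : ℝ) / n) →
      -- conclusion
      |mInner
          ((ThetaMat Uh Vh * (ThetaMat Uh Vh)ᵀ - ThetaMat U V * (ThetaMat U V)ᵀ) *
              dilation M *
            (ThetaMat Uh Vh * (ThetaMat Uh Vh)ᵀ - ThetaMat U V * (ThetaMat U V)ᵀ))
          (Ttil T)| ≤
        C₅ * (4 / ε ^ 2) * frobNorm T * κ * σ *
          Real.sqrt ((max d1 d2 : ℝ) * r * Real.log (max d1 d2 : ℝ) / n) *
          ((σ / lamr) * Real.sqrt ((max d1 d2 : ℝ) * Real.log (max d1 d2 : ℝ) / n)) := by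
  intro C₁ hC₁
  refine ⟨16 * Real.sqrt 2 * C₁ ^ 2, by positivity, ?_⟩
  intro d1 d2 r n ε σ lamr κ M T Zhat U V sval Uh Vh sh _ _ _ _ _ _ _ hlamr hU hV hM hsval hopM hκ
    hUh hVh hbest hZ hZbound
  rw [opNorm_eq_l2_opNorm] at hopM hZ hZbound
  set s := Real.sqrt ((max d1 d2 : ℝ) * Real.log (max d1 d2 : ℝ) / n)
  set a := ‖(1 - ThetaMat U V * (ThetaMat U V)ᵀ) * ThetaMat Uh Vh‖ +
    ‖(1 - ThetaMat Uh Vh * (ThetaMat Uh Vh)ᵀ) * ThetaMat U V‖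
  have ha : a ≤ 4 * (C₁ * (2 / ε) * σ * s) / lamr := by
    rw [le_div_iff₀ hlamr]
    linarith [sinTheta_bound hU hV hM (fun i => (hsval i).1) hlamr hUh hVh hbest hZ]
  have hsqrt : Real.sqrt ((max d1 d2 : ℝ) * r * Real.log (max d1 d2 : ℝ) / n) =
      Real.sqrt r * s := by
    rw [← Real.sqrt_mul (Nat.cast_nonneg r)]
    ring_nf
  have := frobNorm_nonneg T
  calc _ ≤ Real.sqrt 2 * Real.sqrt r * frobNorm T * a ^ 2 :=
        abs_mInner_quadratic_le hU hV hUh hVh hopM.le T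
    _ ≤ Real.sqrt 2 * Real.sqrt r * frobNorm T * (4 * (C₁ * (2 / ε) * σ * s) / lamr) ^ 2 := by
      gcongr
    _ = _ := by
      rw [hκ, hsqrt]
      field_simp
      ring

end
end

section
/- For any integer h ≥ 1, with step size η_t = c·(max{t*, t})^{−α} where α ∈ (0.5,1) and t* is as in the SGD convergence theorem, and for any κ > 0, one has ∑_{τ=1}^{t−1} η_τ^h · ∏_{s=τ+1}^t (1 − η_s/κ) ≤ C̃₁ · η_t^{h−1} for all t, provided the constant c is sufficiently large (in particular c/κ > (h−1)α), where C̃₁ is a constant independent of t. -/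
/-!
Write `F t` for the left-hand side and `k = h - 1`. Splitting off the last summand gives the
recursion `F (t + 1) = (1 - η (t + 1) / κ) * (F t + η t ^ (k + 1))`. Since `η t → 0`,
`η (t + 1) ≥ t / (t + 1) * η t` and `t * η t → ∞` (this is where `α < 1` enters), for all large
`t` the bound `F t ≤ C * η t ^ k` with `C ≥ 4κ` propagates from `t` to `t + 1`: the loss
`C * (η t ^ k - η (t + 1) ^ k) + η t ^ (k + 1)` is at most `C * η t ^ (k + 1) / (2κ)`, which the
contraction factor pays for. The finitely many initial values of `F t / η t ^ k` are then
absorbed into `C`.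
-/

open Finset Filter Topology

theorem sum_mul_prod_Icc_succ {R : Type*} [CommSemiring R] (a b : ℕ → R) {t : ℕ} (ht : 1 ≤ t) :
    ∑ τ ∈ Icc 1 t, b τ * ∏ s ∈ Icc (τ + 1) (t + 1), a s
      = a (t + 1) * (∑ τ ∈ Icc 1 (t - 1), b τ * ∏ s ∈ Icc (τ + 1) t, a s + b t) := by
  obtain ⟨n, rfl⟩ := Nat.exists_eq_add_of_le' ht
  rw [sum_Icc_succ_top (by omega), Nat.add_sub_cancel, Icc_self, prod_singleton, mul_add, mul_sum,
    mul_comm (a _) (b _)]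
  congr 1
  refine sum_congr rfl fun τ hτ => ?_
  rw [prod_Icc_succ_top (by simp at hτ; omega)]
  ring

theorem exists_forall_le_mul_of_eventually {F g : ℕ → ℝ} (hg : ∀ t, 0 < g t) (C₀ : ℝ)
    (hstep : ∀ᶠ t in atTop, ∀ C, C₀ ≤ C → F t ≤ C * g t → F (t + 1) ≤ C * g (t + 1)) :
    ∃ C, C₀ ≤ C ∧ ∀ t, F t ≤ C * g t := by
  obtain ⟨T, hT⟩ := eventually_atTop.1 hstep
  obtain ⟨B, hB⟩ := ((range (T + 1)).image fun t => F t / g t).exists_le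
  have hbase : ∀ t ≤ T, F t ≤ max C₀ B * g t := fun t ht => by
    rw [← div_le_iff₀ (hg t)]
    exact (hB _ (mem_image_of_mem _ (mem_range.2 (Nat.lt_succ_of_le ht)))).trans (le_max_right _ _)
  refine ⟨max C₀ B, le_max_left _ _, fun t => ?_⟩
  rcases le_total t T with ht | ht
  · exact hbase t ht
  · induction t, ht using Nat.le_induction with
    | base => exact hbase T le_rfl
    | succ n hn ih => exact hT n hn _ (le_max_left _ _) ih

theorem pow_sub_pow_le_of_one_sub_mul_le {x y ε : ℝ} (hx : 0 ≤ x) (hε : ε ≤ 1)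
    (hxy : (1 - ε) * x ≤ y) (k : ℕ) : x ^ k - y ^ k ≤ k * ε * x ^ k := by
  have bernoulli : 1 - k * ε ≤ (1 - ε) ^ k := by
    simpa [sub_eq_add_neg] using one_add_mul_le_pow (a := -ε) (by linarith) k
  have hpow : ((1 - ε) * x) ^ k ≤ y ^ k := pow_le_pow_left₀ (by nlinarith) hxy k
  rw [mul_pow] at hpow
  nlinarith [pow_nonneg hx k]

theorem one_sub_div_mul_add_pow_le {κ C x y F : ℝ} (k : ℕ) (hκ : 0 < κ) (hC : 4 * κ ≤ C)
    (hx : 0 < x) (hyκ : y ≤ κ) (hxy : x ≤ 2 * y) (hpow : x ^ k - y ^ k ≤ x / (4 * κ) * x ^ k)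
    (hF : F ≤ C * x ^ k) :
    (1 - y / κ) * (F + x ^ (k + 1)) ≤ C * y ^ k := by
  have hy : 0 < y := by linarith
  have hfac : 0 ≤ 1 - y / κ := by rw [sub_nonneg, div_le_one hκ]; exact hyκ
  have hdrop : C * (x ^ k - y ^ k) ≤ C * (x / (4 * κ) * x ^ k) := by gcongr; linarith
  have hnew : x * x ^ k ≤ C * (x / (4 * κ) * x ^ k) := by
    rw [show C * (x / (4 * κ) * x ^ k) = C / (4 * κ) * (x * x ^ k) by ring]
    exact le_mul_of_one_le_left (by positivity) ((one_le_div (by positivity)).2 hC)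
  have hgain : 2 * (C * (x / (4 * κ) * x ^ k)) ≤ y / κ * (C * x ^ k) := by
    calc 2 * (C * (x / (4 * κ) * x ^ k)) = x / 2 / κ * (C * x ^ k) := by ring
      _ ≤ y / κ * (C * x ^ k) := by
        gcongr
        · exact mul_nonneg (by linarith) (by positivity)
        · linarith
  calc (1 - y / κ) * (F + x ^ (k + 1)) ≤ (1 - y / κ) * (C * x ^ k + x * x ^ k) := by
        rw [pow_succ']; gcongr
    _ = C * x ^ k + x * x ^ k - y / κ * (C * x ^ k) - y / κ * (x * x ^ k) := by ring
    _ ≤ C * y ^ k := by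
        have : 0 ≤ y / κ * (x * x ^ k) := by positivity
        linarith

theorem exists_sum_pow_mul_prod_le {η : ℕ → ℝ} {κ : ℝ} (hκ : 0 < κ) (hη : ∀ t, 0 < η t)
    (hη0 : Tendsto η atTop (𝓝 0))
    (hdecay : ∀ᶠ t : ℕ in atTop, (t / (t + 1) : ℝ) * η t ≤ η (t + 1))
    (htη : Tendsto (fun t : ℕ => t * η t) atTop atTop) (k : ℕ) :
    ∃ C, 0 < C ∧ ∀ t,
      ∑ τ ∈ Icc 1 (t - 1), η τ ^ (k + 1) * ∏ s ∈ Icc (τ + 1) t, (1 - η s / κ) ≤ C * η t ^ k := by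
  set F : ℕ → ℝ := fun t => ∑ τ ∈ Icc 1 (t - 1), η τ ^ (k + 1) * ∏ s ∈ Icc (τ + 1) t, (1 - η s / κ)
  have hstep : ∀ᶠ t in atTop, ∀ C, 4 * κ ≤ C → F t ≤ C * η t ^ k → F (t + 1) ≤ C * η (t + 1) ^ k := by
    filter_upwards [eventually_ge_atTop 1,
      ((tendsto_add_atTop_iff_nat 1).2 hη0).eventually_lt_const hκ, hdecay,
      htη.eventually_ge_atTop (4 * κ * k)] with t ht hκt hdecay_t htη_t C hC hF
    have ht1 : (1 : ℝ) ≤ t := by exact_mod_cast ht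
    have hhalf : η t ≤ 2 * η (t + 1) := by
      have : (1 / 2 : ℝ) ≤ t / (t + 1) := by
        rw [div_le_div_iff₀ (by norm_num) (by positivity)]; linarith
      nlinarith [hη t]
    have hpow : η t ^ k - η (t + 1) ^ k ≤ η t / (4 * κ) * η t ^ k := by
      have hratio : (1 - 1 / (t + 1) : ℝ) * η t ≤ η (t + 1) := by
        rwa [one_sub_div (by positivity), add_sub_cancel_right]
      refine (pow_sub_pow_le_of_one_sub_mul_le (hη t).le ?_ hratio k).trans ?_
      · rw [div_le_one (by positivity)]; linarith
      · gcongr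
        · exact (pow_pos (hη t) k).le
        rw [mul_one_div, div_le_div_iff₀ (by positivity) (by positivity)]
        nlinarith [hη t]
    simp only [F, Nat.add_sub_cancel]
    rw [sum_mul_prod_Icc_succ (fun s => 1 - η s / κ) (fun τ => η τ ^ (k + 1)) ht]
    exact one_sub_div_mul_add_pow_le k hκ hC (hη t) hκt.le hhalf hpow hF
  obtain ⟨C, hC, hbound⟩ := exists_forall_le_mul_of_eventually (fun t => pow_pos (hη t) k) _ hstep
  exact ⟨C, by linarith, hbound⟩

theorem div_mul_rpow_neg_le {x y α : ℝ} (hx : 0 < x) (hxy : x ≤ y) (hα : α ≤ 1) :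
    x / y * x ^ (-α) ≤ y ^ (-α) := by
  have hy : 0 < y := hx.trans_le hxy
  have hmono : x ^ (1 - α) ≤ y ^ (1 - α) := Real.rpow_le_rpow hx.le hxy (by linarith)
  calc x / y * x ^ (-α) = x ^ (1 - α) / y := by
        rw [Real.rpow_sub hx, Real.rpow_one, Real.rpow_neg hx.le]; ring
    _ ≤ y ^ (1 - α) / y := by gcongr
    _ = y ^ (-α) := by rw [Real.rpow_sub hy, Real.rpow_one, Real.rpow_neg hy.le]; field_simp

noncomputable def stepsize (c α : ℝ) (tstar t : ℕ) : ℝ := c * max (tstar : ℝ) t ^ (-α)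

section stepsize

variable {c α : ℝ} {tstar : ℕ}

theorem stepsize_pos (hc : 0 < c) (htstar : 1 ≤ tstar) (t : ℕ) : 0 < stepsize c α tstar t :=
  mul_pos hc (Real.rpow_pos_of_pos (lt_max_of_lt_left (Nat.cast_pos.2 htstar)) _)

theorem stepsize_of_le {t : ℕ} (ht : tstar ≤ t) : stepsize c α tstar t = c * (t : ℝ) ^ (-α) := by
  rw [stepsize, max_eq_right (Nat.cast_le.2 ht)]

theorem stepsize_eventuallyEq : stepsize c α tstar =ᶠ[atTop] fun t : ℕ => c * (t : ℝ) ^ (-α) := by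
  filter_upwards [eventually_ge_atTop tstar] with t ht using stepsize_of_le ht

theorem tendsto_stepsize_zero (hα : 0 < α) : Tendsto (stepsize c α tstar) atTop (𝓝 0) := by
  have h := ((tendsto_rpow_neg_atTop hα).comp tendsto_natCast_atTop_atTop).const_mul c
  rw [mul_zero] at h
  exact h.congr' stepsize_eventuallyEq.symm

theorem tendsto_natCast_mul_stepsize (hc : 0 < c) (hα : α < 1) :
    Tendsto (fun t : ℕ => t * stepsize c α tstar t) atTop atTop := by
  refine (((tendsto_rpow_atTop (sub_pos.2 hα)).comp tendsto_natCast_atTop_atTop).const_mul_atTop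
    hc).congr' ?_
  filter_upwards [eventually_ge_atTop tstar, eventually_gt_atTop 0] with t ht ht0
  have ht0' : (0 : ℝ) < t := by exact_mod_cast ht0
  rw [stepsize_of_le ht, Function.comp_apply, Real.rpow_sub ht0', Real.rpow_one,
    Real.rpow_neg ht0'.le]
  field_simp

theorem stepsize_decay (hc : 0 ≤ c) (hα : α ≤ 1) :
    ∀ᶠ t : ℕ in atTop, (t / (t + 1) : ℝ) * stepsize c α tstar t ≤ stepsize c α tstar (t + 1) := by
  filter_upwards [eventually_ge_atTop tstar, eventually_gt_atTop 0] with t ht ht0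
  rw [stepsize_of_le ht, stepsize_of_le (ht.trans (Nat.le_succ t)), Nat.cast_succ, mul_left_comm]
  exact mul_le_mul_of_nonneg_left (div_mul_rpow_neg_le (by exact_mod_cast ht0) (by linarith) hα) hc

end stepsize

/-- **Step-size summation lemma (Lemma B.8).**
For any integer `h ≥ 1`, step size `η t = c * (max t* t)^(−α)` with `α ∈ (0.5,1)`,
threshold `t* ≥ 1` and any `κ > 0`, provided the constant `c` is sufficiently large
(in particular `c/κ > (h−1)α`), one has
`∑_{τ=1}^{t−1} η_τ^h ∏_{s=τ+1}^t (1 − η_s/κ) ≤ C̃₁ η_t^{h−1}` for all `t`,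
where `C̃₁` does not depend on `t`. -/
theorem stepsize_sum_prod_bound
    (h : ℕ) (hh : 1 ≤ h) (α κ : ℝ) (hα1 : 1/2 < α) (hα2 : α < 1) (hκ : 0 < κ)
    (tstar : ℕ) (htstar : 1 ≤ tstar) :
    ∃ c₀ : ℝ, 0 < c₀ ∧
      ∀ c : ℝ, c₀ ≤ c → (h - 1 : ℝ) * α < c / κ →
        ∃ Ctil : ℝ, 0 < Ctil ∧
          ∀ t : ℕ,
            ∑ τ ∈ Finset.Icc 1 (t - 1),
                (c * (max (tstar : ℝ) (τ : ℝ)) ^ (-α)) ^ h *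
                  ∏ s ∈ Finset.Icc (τ + 1) t,
                    (1 - c * (max (tstar : ℝ) (s : ℝ)) ^ (-α) / κ)
              ≤ Ctil * (c * (max (tstar : ℝ) (t : ℝ)) ^ (-α)) ^ (h - 1) := by
  obtain ⟨k, rfl⟩ := Nat.exists_eq_add_of_le' hh
  refine ⟨1, one_pos, fun c hc _ => ?_⟩
  have hc0 : 0 < c := one_pos.trans_le hc
  rw [Nat.add_sub_cancel]
  exact exists_sum_pow_mul_prod_le hκ (stepsize_pos hc0 htstar)
    (tendsto_stepsize_zero (by linarith)) (stepsize_decay hc0.le hα2.le)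
    (tendsto_natCast_mul_stepsize hc0 hα2) k
end

section
/- For any integer h ≥ 1, with step size η_t = c·(max{t*, t})^{−α} where α ∈ (0.5,1) and t* is as in the SGD convergence theorem, and for any κ > 0: max_{1 ≤ τ ≤ t−1} ( ∏_{s=τ+1}^t (1 − η_s/κ) · η_τ^h ) ≤ C̃₂ · η_t^h, where C̃₂ is a constant independent of t (one may take C̃₂ = exp(c/(2κ)) for τ beyond a constant threshold). -/
open Finset

/-- Elementary: for `x ≥ 1`, `x ^ (q*m) ≤ (m/a)^m * exp (a * x^q)`. -/
lemma my_pow_le_exp (a q : ℝ) (ha : 0 < a) (hq : 0 < q) (m : ℕ) (hm : 1 ≤ m)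
    (x : ℝ) (hx : 1 ≤ x) :
    x ^ (q * m) ≤ ((m : ℝ) / a) ^ m * Real.exp (a * x ^ q) := by
  have hx0 : (0:ℝ) < x := lt_of_lt_of_le one_pos hx
  have hxq : 0 ≤ x ^ q := Real.rpow_nonneg hx0.le q
  have hm0 : (0:ℝ) < m := by exact_mod_cast hm
  set y := a * x ^ q with hy
  have hy0 : 0 ≤ y := mul_nonneg ha.le hxq
  have h1 : (y / m) ^ m ≤ Real.exp y := by
    have he : Real.exp y = (Real.exp (y / m)) ^ m := by
      rw [← Real.exp_nat_mul]
      congr 1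
      field_simp
    rw [he]
    apply pow_le_pow_left₀ (by positivity)
    have := Real.add_one_le_exp (y / m)
    linarith
  have h2 : x ^ (q * (m:ℝ)) = (y / m) ^ m * ((m:ℝ) / a) ^ m := by
    rw [← mul_pow]
    have hh : y / m * ((m:ℝ) / a) = x ^ q := by
      rw [hy]
      field_simp
    rw [hh, ← Real.rpow_natCast (x ^ q) m, ← Real.rpow_mul hx0.le]
  calc x ^ (q * (m:ℝ)) = (y / m) ^ m * ((m:ℝ) / a) ^ m := h2
    _ ≤ Real.exp y * ((m:ℝ) / a) ^ m := by
        exact mul_le_mul_of_nonneg_right h1 (by positivity)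
    _ = ((m:ℝ) / a) ^ m * Real.exp (a * x ^ q) := by rw [hy]; ring

/-- **Step-size maximum lemma (Lemma B.9).**
For any integer `h ≥ 1`, step size `η t = c * (max t* t)^(−α)` with `α ∈ (0.5,1)`,
threshold `t* ≥ 1` and any `κ > 0`:
`max_{1 ≤ τ ≤ t−1} (∏_{s=τ+1}^t (1 − η_s/κ)) · η_τ^h ≤ C̃₂ η_t^h`,
where `C̃₂` is a constant independent of `t`. -/
theorem stepsize_max_prod_bound
    (h : ℕ) (hh : 1 ≤ h) (α κ c : ℝ) (hα1 : 1/2 < α) (hα2 : α < 1)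
    (hκ : 0 < κ) (hc : 0 < c)
    (tstar : ℕ) (htstar : 1 ≤ tstar) :
    ∃ Ctil : ℝ, 0 < Ctil ∧
      ∀ t : ℕ, ∀ τ ∈ Finset.Icc 1 (t - 1),
        (∏ s ∈ Finset.Icc (τ + 1) t,
            (1 - c * (max (tstar : ℝ) (s : ℝ)) ^ (-α) / κ)) *
          (c * (max (tstar : ℝ) (τ : ℝ)) ^ (-α)) ^ h
        ≤ Ctil * (c * (max (tstar : ℝ) (t : ℝ)) ^ (-α)) ^ h := by
  have hα0 : 0 < α := by linarith
  have hq : (0:ℝ) < 1 - α := by linarith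
  set η : ℕ → ℝ := fun s => c * (max (tstar:ℝ) (s:ℝ)) ^ (-α) with hηdef
  have hts1 : (1:ℝ) ≤ (tstar:ℝ) := by exact_mod_cast htstar
  have hmax1 : ∀ s : ℕ, (1:ℝ) ≤ max (tstar:ℝ) (s:ℝ) := fun s => le_max_of_le_left hts1
  have hmaxpos : ∀ s : ℕ, (0:ℝ) < max (tstar:ℝ) (s:ℝ) :=
    fun s => lt_of_lt_of_le one_pos (hmax1 s)
  have hηpos : ∀ s, 0 < η s := fun s => mul_pos hc (Real.rpow_pos_of_pos (hmaxpos s) _)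
  -- ηmax
  set ηmax := c * (tstar:ℝ) ^ (-α) with hηmaxdef
  have htspos : (0:ℝ) < tstar := by linarith
  have hηmaxpos : 0 < ηmax := mul_pos hc (Real.rpow_pos_of_pos htspos _)
  have hηle : ∀ s, η s ≤ ηmax := by
    intro s
    apply mul_le_mul_of_nonneg_left _ hc.le
    exact Real.rpow_le_rpow_of_nonpos htspos (le_max_left _ _) (by linarith)
  have hηmaxc : ηmax ≤ c := by
    have h1 : (tstar:ℝ) ^ (-α) ≤ 1 :=
      Real.rpow_le_one_of_one_le_of_nonpos hts1 (by linarith)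
    calc ηmax ≤ c * 1 := mul_le_mul_of_nonneg_left h1 hc.le
      _ = c := mul_one c
  have hηanti : ∀ s t : ℕ, s ≤ t → η t ≤ η s := by
    intro s t hst
    apply mul_le_mul_of_nonneg_left _ hc.le
    exact Real.rpow_le_rpow_of_nonpos (hmaxpos s)
      (max_le_max le_rfl (by exact_mod_cast hst)) (by linarith)
  -- B : bound on |1 - η s / κ|
  set B := max 1 (ηmax / κ) with hBdef
  have hB1 : (1:ℝ) ≤ B := le_max_left _ _
  have hB0 : (0:ℝ) < B := lt_of_lt_of_le one_pos hB1
  have habs : ∀ s, |1 - η s / κ| ≤ B := by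
    intro s
    have hx0 : 0 ≤ η s / κ := div_nonneg (hηpos s).le hκ.le
    have hx1 : η s / κ ≤ ηmax / κ := by gcongr; exact hηle s
    have hx2 : ηmax / κ ≤ B := le_max_right _ _
    rw [abs_le]
    constructor <;> [linarith; linarith]
  have habsprod : ∀ t₁ t₂ : ℕ,
      |∏ s ∈ Ioc t₁ t₂, (1 - η s / κ)| ≤ B ^ (t₂ - t₁) := by
    intro t₁ t₂
    rw [Finset.abs_prod]
    calc ∏ s ∈ Ioc t₁ t₂, |1 - η s / κ| ≤ ∏ s ∈ Ioc t₁ t₂, B :=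
        Finset.prod_le_prod (fun s _ => abs_nonneg _) (fun s _ => habs s)
      _ = B ^ (t₂ - t₁) := by rw [Finset.prod_const, Nat.card_Ioc]
  -- the threshold N
  set N := max tstar (Nat.ceil ((c/κ) ^ (α⁻¹)) + 1) with hNdef
  have htsN : tstar ≤ N := le_max_left _ _
  have hN1 : 1 ≤ N := le_trans htstar htsN
  have hηN : ∀ s : ℕ, N ≤ s → η s / κ ≤ 1 := by
    intro s hs
    have hstars : (tstar:ℝ) ≤ (s:ℝ) := by exact_mod_cast le_trans htsN hs
    have hmaxs : max (tstar:ℝ) (s:ℝ) = (s:ℝ) := max_eq_right hstars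
    have hs0 : (0:ℝ) < s := by linarith
    have hck : c / κ ≤ (s:ℝ) ^ α := by
      have h1 : (c/κ) ^ (α⁻¹) ≤ (s:ℝ) := by
        calc (c/κ) ^ (α⁻¹) ≤ (Nat.ceil ((c/κ) ^ (α⁻¹)) : ℝ) := Nat.le_ceil _
          _ ≤ (s:ℝ) := by
              exact_mod_cast le_trans (le_trans (Nat.le_succ _) (le_max_right tstar _)) hs
      calc c / κ = ((c/κ) ^ (α⁻¹)) ^ α := by
            rw [← Real.rpow_mul (by positivity), inv_mul_cancel₀ (ne_of_gt hα0),
              Real.rpow_one]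
        _ ≤ (s:ℝ) ^ α := Real.rpow_le_rpow (by positivity) h1 hα0.le
    have heq : η s / κ = (c/κ) * (s:ℝ) ^ (-α) := by
      simp only [hηdef, hmaxs]; ring
    rw [heq]
    calc (c/κ) * (s:ℝ) ^ (-α) ≤ (s:ℝ) ^ α * (s:ℝ) ^ (-α) :=
        mul_le_mul_of_nonneg_right hck (Real.rpow_nonneg hs0.le _)
      _ = (s:ℝ) ^ (α + -α) := (Real.rpow_add hs0 _ _).symm
      _ = 1 := by simp
  -- product over Ioc M t with N ≤ M : nonneg and ≤ exp(-(t-M)·(c/κ)t^{-α})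
  have hfacnn : ∀ s : ℕ, N ≤ s → 0 ≤ 1 - η s / κ := by
    intro s hs; have := hηN s hs; linarith
  have hprodexp : ∀ M t : ℕ, N ≤ M → tstar ≤ t →
      (0 ≤ ∏ s ∈ Ioc M t, (1 - η s / κ)) ∧
      (∏ s ∈ Ioc M t, (1 - η s / κ)) ≤
        Real.exp (-(((t - M : ℕ):ℝ) * ((c/κ) * (t:ℝ) ^ (-α)))) := by
    intro M t hNM hst
    have hmem : ∀ s ∈ Ioc M t, N ≤ s := by
      intro s hs
      have := (Finset.mem_Ioc.mp hs).1
      omega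
    constructor
    · exact Finset.prod_nonneg fun s hs => hfacnn s (hmem s hs)
    · have htpos : (0:ℝ) < t := by
        have : (1:ℝ) ≤ (t:ℝ) := by exact_mod_cast le_trans htstar hst
        linarith
      have hmaxt : max (tstar:ℝ) (t:ℝ) = (t:ℝ) := max_eq_right (by exact_mod_cast hst)
      have step1 : (∏ s ∈ Ioc M t, (1 - η s / κ)) ≤
          ∏ s ∈ Ioc M t, Real.exp (-(η s / κ)) := by
        apply Finset.prod_le_prod
        · intro s hs; exact hfacnn s (hmem s hs)
        · intro s _
          have := Real.add_one_le_exp (-(η s / κ))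
          linarith
      have step2 : ∏ s ∈ Ioc M t, Real.exp (-(η s / κ)) =
          Real.exp (-(∑ s ∈ Ioc M t, η s / κ)) := by
        rw [← Real.exp_sum, ← Finset.sum_neg_distrib]
      have step3 : ((t - M : ℕ):ℝ) * ((c/κ) * (t:ℝ) ^ (-α)) ≤
          ∑ s ∈ Ioc M t, η s / κ := by
        have hlb : ∀ s ∈ Ioc M t, (c/κ) * (t:ℝ) ^ (-α) ≤ η s / κ := by
          intro s hs
          have hsle : s ≤ t := (Finset.mem_Ioc.mp hs).2
          have hbase : max (tstar:ℝ) (s:ℝ) ≤ (t:ℝ) := by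
            rw [← hmaxt]
            exact max_le_max le_rfl (by exact_mod_cast hsle)
          have hr : (t:ℝ) ^ (-α) ≤ (max (tstar:ℝ) (s:ℝ)) ^ (-α) :=
            Real.rpow_le_rpow_of_nonpos (hmaxpos s) hbase (by linarith)
          have : (c/κ) * (t:ℝ) ^ (-α) ≤ (c/κ) * (max (tstar:ℝ) (s:ℝ)) ^ (-α) := by
            apply mul_le_mul_of_nonneg_left hr (by positivity)
          calc (c/κ) * (t:ℝ) ^ (-α) ≤ (c/κ) * (max (tstar:ℝ) (s:ℝ)) ^ (-α) := this
            _ = η s / κ := by simp only [hηdef]; ring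
        calc ((t - M : ℕ):ℝ) * ((c/κ) * (t:ℝ) ^ (-α))
            = (Ioc M t).card • ((c/κ) * (t:ℝ) ^ (-α)) := by
              rw [Nat.card_Ioc, nsmul_eq_mul]
          _ ≤ ∑ s ∈ Ioc M t, η s / κ := Finset.card_nsmul_le_sum _ _ _ hlb
      calc (∏ s ∈ Ioc M t, (1 - η s / κ)) ≤ Real.exp (-(∑ s ∈ Ioc M t, η s / κ)) := by
            rw [← step2]; exact step1
        _ ≤ Real.exp (-(((t - M : ℕ):ℝ) * ((c/κ) * (t:ℝ) ^ (-α)))) := by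
            rw [Real.exp_le_exp]; linarith
  -- constants for the exponential comparison
  set a := c / (2*κ) with hadef
  have ha : 0 < a := by positivity
  set p := α * (h:ℝ) with hpdef
  have hp : 0 < p := by
    have : (1:ℝ) ≤ (h:ℝ) := by exact_mod_cast hh
    positivity
  set m := Nat.ceil (p / (1 - α)) with hmdef
  have hm1 : 1 ≤ m := Nat.one_le_ceil_iff.mpr (by positivity)
  have hpm : p ≤ (1 - α) * m := by
    have h1 := Nat.le_ceil (p / (1 - α))
    calc p = (1 - α) * (p / (1 - α)) := by field_simp
      _ ≤ (1 - α) * (m:ℝ) := by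
          apply mul_le_mul_of_nonneg_left _ hq.le
          exact_mod_cast h1
  set D := ((m:ℝ)/a) ^ m with hDdef
  have hm0 : (0:ℝ) < m := by exact_mod_cast hm1
  have hD : 0 < D := by positivity
  -- ηmin for small t
  have h2N1 : (1:ℝ) ≤ ((2*N : ℕ):ℝ) := by exact_mod_cast Nat.one_le_iff_ne_zero.mpr (by omega)
  set ηmin := c * ((2*N : ℕ):ℝ) ^ (-α) with hηmindef
  have hηminpos : 0 < ηmin := mul_pos hc (Real.rpow_pos_of_pos (by linarith) _)
  set CA := B ^ (2*N) * c ^ h / ηmin ^ h with hCAdef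
  have hCA : 0 < CA := by positivity
  set Ctil := CA + B ^ N * D + (2:ℝ) ^ p with hCtildef
  have h2p : (0:ℝ) < (2:ℝ) ^ p := Real.rpow_pos_of_pos two_pos p
  have hBND : (0:ℝ) < B ^ N * D := by positivity
  refine ⟨Ctil, by positivity, ?_⟩
  intro t τ hτ
  simp only [Finset.mem_Icc] at hτ
  have hτ1 : 1 ≤ τ := hτ.1
  have hτt : τ < t := by omega
  show (∏ s ∈ Finset.Icc (τ + 1) t, (1 - η s / κ)) * (η τ) ^ h ≤ Ctil * (η t) ^ h
  rw [Finset.Icc_add_one_left_eq_Ioc]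
  have hηtnn : (0:ℝ) ≤ (η t) ^ h := pow_nonneg (hηpos t).le h
  have hητnn : (0:ℝ) ≤ (η τ) ^ h := pow_nonneg (hηpos τ).le h
  rcases le_or_gt t (2*N) with hcase | hcase
  · -- Case A : t ≤ 2N
    have hLHS : (∏ s ∈ Ioc τ t, (1 - η s / κ)) * (η τ) ^ h ≤ B ^ (2*N) * c ^ h := by
      calc (∏ s ∈ Ioc τ t, (1 - η s / κ)) * (η τ) ^ h
          ≤ |∏ s ∈ Ioc τ t, (1 - η s / κ)| * (η τ) ^ h :=
            mul_le_mul_of_nonneg_right (le_abs_self _) hητnn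
        _ ≤ B ^ (t - τ) * ηmax ^ h := by
            apply mul_le_mul (habsprod τ t)
              (pow_le_pow_left₀ (hηpos τ).le (hηle τ) h) hητnn (by positivity)
        _ ≤ B ^ (2*N) * c ^ h := by
            apply mul_le_mul (pow_le_pow_right₀ hB1 (by omega))
              (pow_le_pow_left₀ hηmaxpos.le hηmaxc h) (by positivity) (by positivity)
    have hηtmin : ηmin ≤ η t := by
      have hmm : max (tstar:ℝ) ((2*N:ℕ):ℝ) = ((2*N:ℕ):ℝ) := by
        apply max_eq_right
        exact_mod_cast le_trans htsN (by omega : N ≤ 2*N)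
      have : η (2*N) = ηmin := by
        simp only [hηdef, hηmindef, hmm]
      rw [← this]
      exact hηanti t (2*N) hcase
    calc (∏ s ∈ Ioc τ t, (1 - η s / κ)) * (η τ) ^ h ≤ B ^ (2*N) * c ^ h := hLHS
      _ = CA * ηmin ^ h := by
          rw [hCAdef, div_mul_cancel₀]
          positivity
      _ ≤ CA * (η t) ^ h := by
          apply mul_le_mul_of_nonneg_left _ hCA.le
          exact pow_le_pow_left₀ hηminpos.le hηtmin h
      _ ≤ Ctil * (η t) ^ h := by
          apply mul_le_mul_of_nonneg_right _ hηtnn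
          rw [hCtildef]; linarith
  · -- Case t > 2N
    have httstar : tstar ≤ t := by omega
    have hmaxt : max (tstar:ℝ) (t:ℝ) = (t:ℝ) := max_eq_right (by exact_mod_cast httstar)
    have hηt : η t = c * (t:ℝ) ^ (-α) := by simp only [hηdef, hmaxt]
    have ht1 : (1:ℝ) ≤ (t:ℝ) := by exact_mod_cast le_trans htstar httstar
    have htpos : (0:ℝ) < t := by linarith
    have hkey : (t:ℝ) ^ p ≤ D * Real.exp (a * (t:ℝ) ^ (1 - α)) := by
      calc (t:ℝ) ^ p ≤ (t:ℝ) ^ ((1 - α) * (m:ℝ)) :=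
          Real.rpow_le_rpow_of_exponent_le ht1 hpm
        _ ≤ D * Real.exp (a * (t:ℝ) ^ (1 - α)) :=
          my_pow_le_exp a (1 - α) ha hq m hm1 (t:ℝ) ht1
    have hηth : (η t) ^ h = c ^ h * (t:ℝ) ^ (-p) := by
      rw [hηt, mul_pow]
      congr 1
      rw [← Real.rpow_natCast ((t:ℝ) ^ (-α)) h, ← Real.rpow_mul htpos.le]
      congr 1
      rw [hpdef]; ring
    rcases le_or_gt (2*τ) t with hτcase | hτcase
    · -- τ ≤ t/2 : split at M = max N τ
      set M := max N τ with hM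
      have hτM : τ ≤ M := le_max_right _ _
      have hNM : N ≤ M := le_max_left _ _
      have hMt : M ≤ t := by
        rcases max_cases N τ with ⟨h1, _⟩ | ⟨h1, _⟩ <;> omega
      have h2M : 2*M ≤ t := by
        rcases max_cases N τ with ⟨h1, _⟩ | ⟨h1, _⟩ <;> omega
      have hMτN : M - τ ≤ N := by
        rcases max_cases N τ with ⟨h1, _⟩ | ⟨h1, _⟩ <;> omega
      have hsplit : (∏ s ∈ Ioc τ t, (1 - η s / κ)) =
          (∏ s ∈ Ioc τ M, (1 - η s / κ)) * ∏ s ∈ Ioc M t, (1 - η s / κ) :=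
        (Finset.prod_Ioc_consecutive _ hτM hMt).symm
      obtain ⟨hP2nn, hP2le⟩ := hprodexp M t hNM httstar
      have habs1 : |∏ s ∈ Ioc τ M, (1 - η s / κ)| ≤ B ^ N := by
        calc |∏ s ∈ Ioc τ M, (1 - η s / κ)| ≤ B ^ (M - τ) := habsprod τ M
          _ ≤ B ^ N := pow_le_pow_right₀ hB1 hMτN
      have hstep : (∏ s ∈ Ioc τ t, (1 - η s / κ)) * (η τ) ^ h ≤
          B ^ N * Real.exp (-(((t - M : ℕ):ℝ) * ((c/κ) * (t:ℝ) ^ (-α)))) * c ^ h := by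
        rw [hsplit]
        calc (∏ s ∈ Ioc τ M, (1 - η s / κ)) * (∏ s ∈ Ioc M t, (1 - η s / κ)) * (η τ) ^ h
            ≤ |∏ s ∈ Ioc τ M, (1 - η s / κ)| * (∏ s ∈ Ioc M t, (1 - η s / κ)) * (η τ) ^ h := by
              apply mul_le_mul_of_nonneg_right _ hητnn
              exact mul_le_mul_of_nonneg_right (le_abs_self _) hP2nn
          _ ≤ B ^ N * Real.exp (-(((t - M : ℕ):ℝ) * ((c/κ) * (t:ℝ) ^ (-α)))) * c ^ h := by
              apply mul_le_mul _ _ hητnn (by positivity)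
              · exact mul_le_mul habs1 hP2le hP2nn (by positivity)
              · calc (η τ) ^ h ≤ ηmax ^ h := pow_le_pow_left₀ (hηpos τ).le (hηle τ) h
                  _ ≤ c ^ h := pow_le_pow_left₀ hηmaxpos.le hηmaxc h
      have hcard : ((t - M : ℕ):ℝ) = (t:ℝ) - (M:ℝ) := by
        push_cast [hMt]; ring
      have hexp : Real.exp (-(((t - M : ℕ):ℝ) * ((c/κ) * (t:ℝ) ^ (-α)))) ≤
          Real.exp (-(a * (t:ℝ) ^ (1 - α))) := by
        rw [Real.exp_le_exp, neg_le_neg_iff, hcard]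
        have hM2 : (M:ℝ) ≤ (t:ℝ)/2 := by
          have : ((2*M : ℕ):ℝ) ≤ (t:ℝ) := by exact_mod_cast h2M
          push_cast at this
          linarith
        have hts : (t:ℝ) ^ (1 - α) = (t:ℝ) * (t:ℝ) ^ (-α) := by
          rw [show (1:ℝ) - α = 1 + -α by ring, Real.rpow_add htpos, Real.rpow_one]
        calc a * (t:ℝ) ^ (1 - α) = ((t:ℝ)/2) * ((c/κ) * (t:ℝ) ^ (-α)) := by
              rw [hts, hadef]; field_simp
          _ ≤ ((t:ℝ) - (M:ℝ)) * ((c/κ) * (t:ℝ) ^ (-α)) := by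
              apply mul_le_mul_of_nonneg_right _ (by positivity)
              linarith
      have hgoal : B ^ N * Real.exp (-(a * (t:ℝ) ^ (1 - α))) ≤ Ctil * (t:ℝ) ^ (-p) := by
        rw [Real.exp_neg, Real.rpow_neg htpos.le, ← div_eq_mul_inv, ← div_eq_mul_inv,
          div_le_div_iff₀ (Real.exp_pos _) (Real.rpow_pos_of_pos htpos _)]
        calc B ^ N * (t:ℝ) ^ p ≤ B ^ N * (D * Real.exp (a * (t:ℝ) ^ (1 - α))) :=
            mul_le_mul_of_nonneg_left hkey (by positivity)
          _ = (B ^ N * D) * Real.exp (a * (t:ℝ) ^ (1 - α)) := by ring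
          _ ≤ Ctil * Real.exp (a * (t:ℝ) ^ (1 - α)) := by
              apply mul_le_mul_of_nonneg_right _ (Real.exp_pos _).le
              rw [hCtildef]; linarith
      calc (∏ s ∈ Ioc τ t, (1 - η s / κ)) * (η τ) ^ h
          ≤ B ^ N * Real.exp (-(((t - M : ℕ):ℝ) * ((c/κ) * (t:ℝ) ^ (-α)))) * c ^ h := hstep
        _ ≤ B ^ N * Real.exp (-(a * (t:ℝ) ^ (1 - α))) * c ^ h := by
            apply mul_le_mul_of_nonneg_right _ (by positivity)
            exact mul_le_mul_of_nonneg_left hexp (by positivity)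
        _ ≤ (Ctil * (t:ℝ) ^ (-p)) * c ^ h := mul_le_mul_of_nonneg_right hgoal (by positivity)
        _ = Ctil * (η t) ^ h := by rw [hηth]; ring
    · -- t < 2τ
      have hNτ : N < τ := by omega
      have hτstar : tstar ≤ τ := le_trans htsN hNτ.le
      have hmem : ∀ s ∈ Ioc τ t, N ≤ s := by
        intro s hs
        have := (Finset.mem_Ioc.mp hs).1
        omega
      have hprod1 : (∏ s ∈ Ioc τ t, (1 - η s / κ)) ≤ 1 := by
        apply Finset.prod_le_one
        · intro s hs; exact hfacnn s (hmem s hs)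
        · intro s _
          have := (hηpos s).le
          have h0 : 0 ≤ η s / κ := div_nonneg this hκ.le
          linarith
      have hητ : η τ = c * (τ:ℝ) ^ (-α) := by
        simp only [hηdef]
        rw [max_eq_right (by exact_mod_cast hτstar)]
      have hτhalf : (t:ℝ)/2 ≤ (τ:ℝ) := by
        have : (t:ℝ) < ((2*τ : ℕ):ℝ) := by exact_mod_cast hτcase
        push_cast at this
        linarith
      have ht2pos : (0:ℝ) < (t:ℝ)/2 := by linarith
      have hmid : (η τ) ^ h ≤ (c * ((t:ℝ)/2) ^ (-α)) ^ h := by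
        apply pow_le_pow_left₀ (hηpos τ).le
        rw [hητ]
        apply mul_le_mul_of_nonneg_left _ hc.le
        exact Real.rpow_le_rpow_of_nonpos ht2pos hτhalf (by linarith)
      have hcomp : (c * ((t:ℝ)/2) ^ (-α)) ^ h = (2:ℝ) ^ p * (η t) ^ h := by
        rw [hηth, mul_pow]
        have h1 : ((t:ℝ)/2) ^ (-α) = (t:ℝ) ^ (-α) * (2:ℝ) ^ α := by
          rw [div_eq_mul_inv, Real.mul_rpow htpos.le (by norm_num : (0:ℝ) ≤ (2:ℝ)⁻¹),
            Real.inv_rpow (by norm_num : (0:ℝ) ≤ 2), ← Real.rpow_neg (by norm_num : (0:ℝ) ≤ 2),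
            neg_neg]
        rw [h1, mul_pow]
        have h2 : ((t:ℝ) ^ (-α)) ^ h = (t:ℝ) ^ (-p) := by
          rw [← Real.rpow_natCast ((t:ℝ) ^ (-α)) h, ← Real.rpow_mul htpos.le]
          congr 1
          rw [hpdef]; ring
        have h3 : ((2:ℝ) ^ α) ^ h = (2:ℝ) ^ p := by
          rw [← Real.rpow_natCast ((2:ℝ) ^ α) h, ← Real.rpow_mul (by norm_num : (0:ℝ) ≤ 2),
            hpdef]
        rw [h2, h3]
        ring
      calc (∏ s ∈ Ioc τ t, (1 - η s / κ)) * (η τ) ^ h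
          ≤ 1 * (η τ) ^ h := mul_le_mul_of_nonneg_right hprod1 hητnn
        _ = (η τ) ^ h := one_mul _
        _ ≤ (c * ((t:ℝ)/2) ^ (-α)) ^ h := hmid
        _ = (2:ℝ) ^ p * (η t) ^ h := hcomp
        _ ≤ Ctil * (η t) ^ h := by
            apply mul_le_mul_of_nonneg_right _ hηtnn
            rw [hCtildef]; linarith
end

section
/- For any integer h ≥ 1, real constants 0 < α < 1 and κ, c > 0 with c/κ > (h−1)α, and any 1 ≤ u ≤ t: ∫_u^t x^{−hα} exp( (c/κ)·x^{1−α}/(1−α) ) dx ≤ (c/κ − (h−1)α)^{−1} · [ x^{−(h−1)α} exp( (c/κ)·x^{1−α}/(1−α) ) ]_{x=u}^{x=t}. -/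
/-!
With `p = -(h-1)α`, `s = 1-α`, `r = c/κ`, the bracketed function `g x = x^p exp(r x^s / s)` has
derivative `x^(p+s-1) exp(r x^s / s) (p x^(-s) + r)`. For `x ≥ 1` and `p ≤ 0` the last factor is
at least `r + p > 0`, so `(r + p)` times the integrand is dominated by `g'`, and integrating
gives the bound.
-/

open Real Set

theorem hasDerivAt_rpow_mul_exp_rpow_div {p r s x : ℝ} (hx : 0 < x) (hs : s ≠ 0) :
    HasDerivAt (fun y => y ^ p * exp (r * y ^ s / s))
      (x ^ (p + s - 1) * exp (r * x ^ s / s) * (p * x ^ (-s) + r)) x := by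
  have hexp : HasDerivAt (fun y => r * y ^ s / s) (r * x ^ (s - 1)) x :=
    (((hasDerivAt_rpow_const (Or.inl hx.ne')).const_mul r).div_const s).congr_deriv
      (by field_simp)
  refine ((hasDerivAt_rpow_const (p := p) (Or.inl hx.ne')).mul hexp.exp).congr_deriv ?_
  have h₁ : x ^ (p + s - 1) * x ^ (-s) = x ^ (p - 1) := by
    rw [← rpow_add hx]; ring_nf
  have h₂ : x ^ (p + s - 1) = x ^ p * x ^ (s - 1) := by
    rw [← rpow_add hx]; ring_nf
  linear_combination -(p * exp (r * x ^ s / s)) * h₁ - (r * exp (r * x ^ s / s)) * h₂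

theorem integral_rpow_mul_exp_rpow_div_le {p r s u t : ℝ} (hp : p ≤ 0) (hs : 0 < s)
    (hrp : 0 < r + p) (hu : 1 ≤ u) (hut : u ≤ t) :
    ∫ x in u..t, x ^ (p + s - 1) * exp (r * x ^ s / s)
      ≤ (r + p)⁻¹ * (t ^ p * exp (r * t ^ s / s) - u ^ p * exp (r * u ^ s / s)) := by
  have hpos : ∀ x ∈ Icc u t, 0 < x := fun x hx => by linarith [hx.1]
  have hderiv : ∀ x ∈ Icc u t, HasDerivAt (fun y => y ^ p * exp (r * y ^ s / s))
      (x ^ (p + s - 1) * exp (r * x ^ s / s) * (p * x ^ (-s) + r)) x :=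
    fun x hx => hasDerivAt_rpow_mul_exp_rpow_div (hpos x hx) hs.ne'
  have hcont : ContinuousOn (fun x => (r + p) * (x ^ (p + s - 1) * exp (r * x ^ s / s)))
      (Icc u t) := by
    fun_prop (disch := intro x hx; simp [(hpos x hx).ne', hs.ne'])
  rw [le_inv_mul_iff₀ hrp, ← intervalIntegral.integral_const_mul]
  refine intervalIntegral.integral_le_sub_of_hasDeriv_right_of_le hut
    (fun x hx => (hderiv x hx).continuousAt.continuousWithinAt)
    (fun x hx => (hderiv x (Ioo_subset_Icc_self hx)).hasDerivWithinAt)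
    hcont.integrableOn_Icc fun x hx => ?_
  have hx₀ : 0 < x := hpos x (Ioo_subset_Icc_self hx)
  have hpx : p ≤ p * x ^ (-s) := le_mul_of_le_one_right hp
    (rpow_le_one_of_one_le_of_nonpos (hu.trans hx.1.le) (neg_nonpos.mpr hs.le))
  rw [mul_comm (r + p)]
  exact mul_le_mul_of_nonneg_left (by linarith) (by positivity)

theorem int_by_parts_rpow_exp_bound_general
    (h : ℕ) (hh : 1 ≤ h) (α κ c u t : ℝ)
    (hα1 : 0 < α) (hα2 : α < 1)
    (hcκ : (h - 1 : ℝ) * α < c / κ) (hu : 1 ≤ u) (hut : u ≤ t) :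
    (∫ x in u..t, x ^ (-(h : ℝ) * α) * Real.exp ((c / κ) * x ^ (1 - α) / (1 - α)))
      ≤ (c / κ - (h - 1 : ℝ) * α)⁻¹ *
        ((t ^ (-((h : ℝ) - 1) * α) * Real.exp ((c / κ) * t ^ (1 - α) / (1 - α)))
          - (u ^ (-((h : ℝ) - 1) * α) * Real.exp ((c / κ) * u ^ (1 - α) / (1 - α)))) := by
  have hp : -((h : ℝ) - 1) * α ≤ 0 := by
    have : (1 : ℝ) ≤ h := by exact_mod_cast hh
    nlinarith
  rw [show -(h : ℝ) * α = -((h : ℝ) - 1) * α + (1 - α) - 1 by ring,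
    show c / κ - (h - 1 : ℝ) * α = c / κ + -((h : ℝ) - 1) * α by ring]
  exact integral_rpow_mul_exp_rpow_div_le hp (sub_pos.2 hα2) (by linarith) hu hut

/-- **Integration-by-parts inequality (used in Lemma B.8).**
For any integer `h ≥ 1`, constants `0 < α < 1`, `κ, c > 0` with `c/κ > (h−1)α`,
and any `1 ≤ u ≤ t`:
`∫_u^t x^{−hα} exp((c/κ) x^{1−α}/(1−α)) dx
  ≤ (c/κ − (h−1)α)⁻¹ [x^{−(h−1)α} exp((c/κ) x^{1−α}/(1−α))]_{x=u}^{x=t}`. -/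
theorem int_by_parts_rpow_exp_bound
    (h : ℕ) (hh : 1 ≤ h) (α κ c u t : ℝ)
    (hα1 : 0 < α) (hα2 : α < 1) (hκ : 0 < κ) (hc : 0 < c)
    (hcκ : (h - 1 : ℝ) * α < c / κ) (hu : 1 ≤ u) (hut : u ≤ t) :
    (∫ x in u..t, x ^ (-(h : ℝ) * α) * Real.exp ((c / κ) * x ^ (1 - α) / (1 - α)))
      ≤ (c / κ - (h - 1 : ℝ) * α)⁻¹ *
        ((t ^ (-((h : ℝ) - 1) * α) * Real.exp ((c / κ) * t ^ (1 - α) / (1 - α)))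
          - (u ^ (-((h : ℝ) - 1) * α) * Real.exp ((c / κ) * u ^ (1 - α) / (1 - α)))) :=
  int_by_parts_rpow_exp_bound_general h hh α κ c u t hα1 hα2 hcκ hu hut
end
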